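/- arXiv:2307.05980 — 9 statements merged into one kernel-verified Lean document; each statement's English description precedes it below -/
import Mathlib

section
/- Let F : C → D and G : D → C be functors with F left adjoint to G, with unit η : 1_C → GF. Suppose Θ : D → D is an equivalence, F is a generating class of objects of C, and for each P in F an isomorphism θ_P : F(P) ≅ Θ(F(P)) is given. If there exists a natural transformation ν : G ∘ Θ ∘ F → 1_C such that ν_P ∘ G(θ_P) ∘ η_P = id_P for every P in F, then F is twisted separable with twisted separability datum (Θ, F, θ), i.e. there exists a morphism M_{V,W} : Hom_D(F(V), ΘF(W)) → Hom_C(V, W), natural in V and W, with M_{P,P}(θ_P) = id_P for all P in F. -/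
/-! `M_{V,W}(f) := ν_W ∘ G(f) ∘ η_V` is natural in `V` and `W` because `η` and `ν` are, and the
hypothesis on `ν` is exactly the normalisation `M_{P,P}(θ_P) = id_P`. -/

open CategoryTheory

def IsGeneratingClass {C : Type*} [Category C] (F : Set C) : Prop :=
  ∀ V : C, ∃ P ∈ F, ∃ p : P ⟶ V, Epi p

namespace CategoryTheory.Adjunction

variable {C D : Type*} [Category C] [Category D] {F : C ⥤ D} {G : D ⥤ C}

def twistedSeparabilityMap (adj : F ⊣ G) {T : D ⥤ D} (ν : F ⋙ T ⋙ G ⟶ 𝟭 C) {V W : C}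
    (f : F.obj V ⟶ T.obj (F.obj W)) : V ⟶ W :=
  adj.homEquiv V _ f ≫ ν.app W

theorem twistedSeparabilityMap_naturality (adj : F ⊣ G) {T : D ⥤ D} (ν : F ⋙ T ⋙ G ⟶ 𝟭 C)
    {V' V W W' : C} (α : V' ⟶ V) (β : W ⟶ W') (f : F.obj V ⟶ T.obj (F.obj W)) :
    α ≫ adj.twistedSeparabilityMap ν f ≫ β =
      adj.twistedSeparabilityMap ν (F.map α ≫ f ≫ T.map (F.map β)) := by
  have hν : G.map (T.map (F.map β)) ≫ ν.app W' = ν.app W ≫ β := ν.naturality β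
  rw [twistedSeparabilityMap, twistedSeparabilityMap, homEquiv_naturality_left,
    homEquiv_naturality_right, Category.assoc, Category.assoc, Category.assoc, hν]

theorem twistedSeparabilityMap_eq (adj : F ⊣ G) {T : D ⥤ D} (ν : F ⋙ T ⋙ G ⟶ 𝟭 C) {V W : C}
    (f : F.obj V ⟶ T.obj (F.obj W)) :
    adj.twistedSeparabilityMap ν f = adj.unit.app V ≫ G.map f ≫ ν.app W := by
  rw [twistedSeparabilityMap, homEquiv_unit, Category.assoc]

end CategoryTheory.Adjunction

theorem twisted_separable_of_nu_general
    {C D : Type*} [Category C] [Category D]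
    (F : C ⥤ D) (G : D ⥤ C) (adj : F ⊣ G)
    (Θ : D ≌ D) (𝓕 : Set C)
    (θiso : ∀ P : C, P ∈ 𝓕 → (F.obj P ≅ Θ.functor.obj (F.obj P)))
    (ν : F ⋙ Θ.functor ⋙ G ⟶ 𝟭 C)
    (hν : ∀ (P : C) (hP : P ∈ 𝓕),
      adj.unit.app P ≫ G.map (θiso P hP).hom ≫ ν.app P = 𝟙 P) :
    ∃ M : ∀ V W : C, (F.obj V ⟶ Θ.functor.obj (F.obj W)) → (V ⟶ W),
      (∀ (V' V W W' : C) (α : V' ⟶ V) (β : W ⟶ W')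
        (f : F.obj V ⟶ Θ.functor.obj (F.obj W)),
          α ≫ M V W f ≫ β = M V' W' (F.map α ≫ f ≫ Θ.functor.map (F.map β))) ∧
      (∀ (P : C) (hP : P ∈ 𝓕), M P P (θiso P hP).hom = 𝟙 P) :=
  ⟨fun _ _ => adj.twistedSeparabilityMap ν,
    fun _ _ _ _ α β f => adj.twistedSeparabilityMap_naturality ν α β f,
    fun P hP => (adj.twistedSeparabilityMap_eq ν _).trans (hν P hP)⟩

/-- Rafael-type sufficient criterion for twisted separability of a
left adjoint functor. -/
theorem twisted_separable_of_nu
    {C D : Type*} [Category C] [Category D]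
    (F : C ⥤ D) (G : D ⥤ C) (adj : F ⊣ G)
    (Θ : D ≌ D) (𝓕 : Set C) (hgen : IsGeneratingClass 𝓕)
    (θiso : ∀ P : C, P ∈ 𝓕 → (F.obj P ≅ Θ.functor.obj (F.obj P)))
    (ν : F ⋙ Θ.functor ⋙ G ⟶ 𝟭 C)
    (hν : ∀ (P : C) (hP : P ∈ 𝓕),
      adj.unit.app P ≫ G.map (θiso P hP).hom ≫ ν.app P = 𝟙 P) :
    ∃ M : ∀ V W : C, (F.obj V ⟶ Θ.functor.obj (F.obj W)) → (V ⟶ W),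
      (∀ (V' V W W' : C) (α : V' ⟶ V) (β : W ⟶ W')
        (f : F.obj V ⟶ Θ.functor.obj (F.obj W)),
          α ≫ M V W f ≫ β = M V' W' (F.map α ≫ f ≫ Θ.functor.map (F.map β))) ∧
      (∀ (P : C) (hP : P ∈ 𝓕), M P P (θiso P hP).hom = 𝟙 P) :=
  twisted_separable_of_nu_general F G adj Θ 𝓕 θiso ν hν
end

section
/- Let F : C → D and G : D → C be functors with F left adjoint to G, with unit η : 1_C → GF. Suppose Θ : D → D is an equivalence, F is a generating class of objects of C, and for each P in F an isomorphism θ_P : F(P) ≅ Θ(F(P)) is given. If F is twisted separable with twisted separability datum (Θ, F, θ) via a natural family M_{-,-}, then the maps ν_X := M_{GΘF(X), X}(ε_{ΘF(X)}) (where ε is the counit of the adjunction) define a natural transformation ν : G ∘ Θ ∘ F → 1_C satisfying ν_P ∘ G(θ_P) ∘ η_P = id_P for every P in F. -/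
/-!
Naturality of `M` in its first variable moves morphisms `α` inside as `F α`, and in its
second variable as `ΘF β`. Together with naturality of the counit this makes
`ν_X = M(ε_{ΘF(X)})` natural, and the triangle identity `F η_P ≫ ε_{F P} = 𝟙` collapses
`η_P ≫ G θ_P ≫ ν_P` to `M_{P,P}(θ_P)`, which is the identity for `P` in the class.
-/

open CategoryTheory

namespace TwistedSeparable

variable {C D : Type*} [Category C] [Category D] {F : C ⥤ D} {G : D ⥤ C} {Θ : D ⥤ D}
  {M : ∀ V W : C, (F.obj V ⟶ Θ.obj (F.obj W)) → (V ⟶ W)}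
  (hMnat : ∀ (V' V W W' : C) (α : V' ⟶ V) (β : W ⟶ W')
    (f : F.obj V ⟶ Θ.obj (F.obj W)), α ≫ M V W f ≫ β = M V' W' (F.map α ≫ f ≫ Θ.map (F.map β)))
include hMnat

lemma comp_M {V' V W : C} (α : V' ⟶ V) (f : F.obj V ⟶ Θ.obj (F.obj W)) :
    α ≫ M V W f = M V' W (F.map α ≫ f) := by
  simpa using hMnat V' V W W α (𝟙 W) f

lemma M_comp {V W W' : C} (f : F.obj V ⟶ Θ.obj (F.obj W)) (β : W ⟶ W') :
    M V W f ≫ β = M V W' (f ≫ Θ.map (F.map β)) := by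
  simpa using hMnat V V W W' (𝟙 V) β f

variable (adj : F ⊣ G)

@[simps]
def nu : F ⋙ Θ ⋙ G ⟶ 𝟭 C where
  app X := M (G.obj (Θ.obj (F.obj X))) X (adj.counit.app (Θ.obj (F.obj X)))
  naturality X Y f := by
    simp only [Functor.comp_obj, Functor.comp_map, Functor.id_obj, Functor.id_map]
    rw [comp_M hMnat, M_comp hMnat, Adjunction.counit_naturality]

lemma unit_comp_map_comp_nu_app (P : C) (θ : F.obj P ⟶ Θ.obj (F.obj P)) :
    adj.unit.app P ≫ G.map θ ≫ (nu hMnat adj).app P = M P P θ :=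
  calc _ = M P P (F.map (adj.unit.app P ≫ G.map θ) ≫ adj.counit.app (Θ.obj (F.obj P))) :=
        (Category.assoc _ _ _).symm.trans (comp_M hMnat _ _)
    _ = M P P θ := by simp

end TwistedSeparable

theorem nu_of_twisted_separable_general
    {C D : Type*} [Category C] [Category D]
    (F : C ⥤ D) (G : D ⥤ C) (adj : F ⊣ G)
    (Θ : D ≌ D) (𝓕 : Set C)
    (θiso : ∀ P : C, P ∈ 𝓕 → (F.obj P ≅ Θ.functor.obj (F.obj P)))
    (M : ∀ V W : C, (F.obj V ⟶ Θ.functor.obj (F.obj W)) → (V ⟶ W))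
    (hMnat : ∀ (V' V W W' : C) (α : V' ⟶ V) (β : W ⟶ W')
        (f : F.obj V ⟶ Θ.functor.obj (F.obj W)),
          α ≫ M V W f ≫ β = M V' W' (F.map α ≫ f ≫ Θ.functor.map (F.map β)))
    (hM : ∀ (P : C) (hP : P ∈ 𝓕), M P P (θiso P hP).hom = 𝟙 P) :
    ∃ ν : F ⋙ Θ.functor ⋙ G ⟶ 𝟭 C,
      (∀ X : C, ν.app X =
        M (G.obj (Θ.functor.obj (F.obj X))) X (adj.counit.app (Θ.functor.obj (F.obj X)))) ∧
      (∀ (P : C) (hP : P ∈ 𝓕),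
        adj.unit.app P ≫ G.map (θiso P hP).hom ≫ ν.app P = 𝟙 P) :=
  ⟨TwistedSeparable.nu hMnat adj, fun _ => rfl, fun P hP => by
    rw [TwistedSeparable.unit_comp_map_comp_nu_app, hM P hP]⟩

/-- from a twisted separability datum for a left adjoint functor one
obtains a natural transformation `ν : G ∘ Θ ∘ F ⟶ 1_C`, given by
`ν_X = M_{GΘF(X),X}(ε_{ΘF(X)})`, satisfying `ν_P ∘ G(θ_P) ∘ η_P = id_P` for `P` in
the generating class. -/
theorem nu_of_twisted_separable
    {C D : Type*} [Category C] [Category D]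
    (F : C ⥤ D) (G : D ⥤ C) (adj : F ⊣ G)
    (Θ : D ≌ D) (𝓕 : Set C) (hgen : IsGeneratingClass 𝓕)
    (θiso : ∀ P : C, P ∈ 𝓕 → (F.obj P ≅ Θ.functor.obj (F.obj P)))
    (M : ∀ V W : C, (F.obj V ⟶ Θ.functor.obj (F.obj W)) → (V ⟶ W))
    (hMnat : ∀ (V' V W W' : C) (α : V' ⟶ V) (β : W ⟶ W')
        (f : F.obj V ⟶ Θ.functor.obj (F.obj W)),
          α ≫ M V W f ≫ β = M V' W' (F.map α ≫ f ≫ Θ.functor.map (F.map β)))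
    (hM : ∀ (P : C) (hP : P ∈ 𝓕), M P P (θiso P hP).hom = 𝟙 P) :
    ∃ ν : F ⋙ Θ.functor ⋙ G ⟶ 𝟭 C,
      (∀ X : C, ν.app X =
        M (G.obj (Θ.functor.obj (F.obj X))) X (adj.counit.app (Θ.functor.obj (F.obj X)))) ∧
      (∀ (P : C) (hP : P ∈ 𝓕),
        adj.unit.app P ≫ G.map (θiso P hP).hom ≫ ν.app P = 𝟙 P) :=
  nu_of_twisted_separable_general F G adj Θ 𝓕 θiso M hMnat hM
end

section
/- Let G : D → C be right adjoint to F : C → D with counit ε. Suppose Θ is an autoequivalence of C with chosen quasi-inverse Θ⁻¹ and adjoint equivalence isomorphisms u : 1_C → ΘΘ⁻¹, v : Θ⁻¹Θ → 1_C, F is a generating class of objects of D, and θ_P : G(P) ≅ ΘG(P) are isomorphisms for P in F. Then G is twisted separable with datum (Θ, F, θ) if and only if there exists a natural transformation ξ : 1_D → FΘ⁻¹G such that for each P in F, ε_P ∘ F(v_{G(P)} ∘ Θ⁻¹(θ_P)) ∘ ξ_P = id_P. -/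
/-!
Composing `Θ⁻¹ ⊣ Θ` with `F ⊣ G` gives an adjunction `Θ⁻¹F ⊣ ΘG`, hence natural bijections
`Hom_C(GX, ΘGY) ≅ Hom_D(FΘ⁻¹GX, Y)`, `f ↦ f♭`. By Yoneda in `Y`, families `M` natural in both
variables are exactly those of the form `M f = ξ_X ≫ f♭` for a natural `ξ : 1_D → FΘ⁻¹G`,
recovered as `ξ_X = M(unit_{GX})`. The condition `M(θ_P) = id_P` then reads `ξ_P ≫ θ_P♭ = id_P`,
and the counit of the composite adjunction computes `θ_P♭ = ε_P ∘ F(v_{GP} ∘ Θ⁻¹θ_P)`.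
-/

open CategoryTheory

namespace CategoryTheory

variable {C D : Type*} [Category C] [Category D]

def IsNaturalHomMap (K R : D ⥤ C) (M : ∀ X Y : D, (K.obj X ⟶ R.obj Y) → (X ⟶ Y)) : Prop :=
  ∀ (X' X Y Y' : D) (α : X' ⟶ X) (β : Y ⟶ Y') (f : K.obj X ⟶ R.obj Y),
    α ≫ M X Y f ≫ β = M X' Y' (K.map α ≫ f ≫ R.map β)

variable {K : D ⥤ C} {L : C ⥤ D} {R : D ⥤ C} (adj : L ⊣ R)

theorem isNaturalHomMap_comp_homEquiv_symm (ξ : 𝟭 D ⟶ K ⋙ L) :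
    IsNaturalHomMap K R fun X _ f => ξ.app X ≫ (adj.homEquiv _ _).symm f := by
  intro X' X Y Y' α β f
  dsimp only
  rw [← Category.assoc (K.map α), adj.homEquiv_naturality_right_symm,
    adj.homEquiv_naturality_left_symm]
  simp only [Category.assoc]
  exact ξ.naturality_assoc α _

namespace IsNaturalHomMap

variable {M : ∀ X Y : D, (K.obj X ⟶ R.obj Y) → (X ⟶ Y)}

def natTrans (hM : IsNaturalHomMap K R M) : 𝟭 D ⟶ K ⋙ L where
  app X := M X _ (adj.unit.app (K.obj X))
  naturality X Y α := by
    dsimp only [Functor.id_obj, Functor.comp_obj, Functor.id_map, Functor.comp_map]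
    rw [← Category.comp_id (M Y _ _), hM, ← Category.id_comp (M X _ _ ≫ _), hM]
    congr 1
    simp

theorem eq_natTrans_app_comp (hM : IsNaturalHomMap K R M) {X Y : D} (f : K.obj X ⟶ R.obj Y) :
    M X Y f = (hM.natTrans adj).app X ≫ (adj.homEquiv _ _).symm f := by
  have h := hM X X _ Y (𝟙 X) ((adj.homEquiv _ _).symm f) (adj.unit.app (K.obj X))
  simp only [Category.id_comp, K.map_id] at h
  rw [show (hM.natTrans adj).app X = M X _ (adj.unit.app (K.obj X)) from rfl, h,
    ← adj.homEquiv_unit, Equiv.apply_symm_apply]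

end IsNaturalHomMap

theorem exists_isNaturalHomMap_iff (S : Set D) (θ : ∀ P ∈ S, K.obj P ⟶ R.obj P) :
    (∃ M, IsNaturalHomMap K R M ∧ ∀ P hP, M P P (θ P hP) = 𝟙 P) ↔
      ∃ ξ : 𝟭 D ⟶ K ⋙ L, ∀ P hP, ξ.app P ≫ (adj.homEquiv _ _).symm (θ P hP) = 𝟙 P := by
  constructor
  · rintro ⟨M, hM, hθ⟩
    exact ⟨hM.natTrans adj, fun P hP => hM.eq_natTrans_app_comp adj _ ▸ hθ P hP⟩
  · rintro ⟨ξ, hξ⟩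
    exact ⟨_, isNaturalHomMap_comp_homEquiv_symm adj ξ, hξ⟩

end CategoryTheory

theorem twisted_separable_right_adjoint_iff_general
    {C D : Type*} [Category C] [Category D]
    (F : C ⥤ D) (G : D ⥤ C) (adj : F ⊣ G)
    (Θ : C ≌ C) (𝓕 : Set D)
    (θiso : ∀ P : D, P ∈ 𝓕 → (G.obj P ≅ Θ.functor.obj (G.obj P))) :
    (∃ M : ∀ X Y : D, (G.obj X ⟶ Θ.functor.obj (G.obj Y)) → (X ⟶ Y),
      (∀ (X' X Y Y' : D) (α : X' ⟶ X) (β : Y ⟶ Y')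
        (f : G.obj X ⟶ Θ.functor.obj (G.obj Y)),
          α ≫ M X Y f ≫ β = M X' Y' (G.map α ≫ f ≫ Θ.functor.map (G.map β))) ∧
      (∀ (P : D) (hP : P ∈ 𝓕), M P P (θiso P hP).hom = 𝟙 P)) ↔
    (∃ ξ : 𝟭 D ⟶ G ⋙ Θ.inverse ⋙ F,
      ∀ (P : D) (hP : P ∈ 𝓕),
        ξ.app P ≫
          F.map (Θ.inverse.map (θiso P hP).hom ≫ Θ.unitIso.inv.app (G.obj P)) ≫
            adj.counit.app P = 𝟙 P) := by
  have flat_eq (P : D) (g : G.obj P ⟶ Θ.functor.obj (G.obj P)) :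
      ((Θ.symm.toAdjunction.comp adj).homEquiv _ _).symm g =
        F.map (Θ.inverse.map g ≫ Θ.unitIso.inv.app (G.obj P)) ≫ adj.counit.app P := by
    simp [Adjunction.homEquiv_counit]
  have key :=
    exists_isNaturalHomMap_iff (Θ.symm.toAdjunction.comp adj) 𝓕 fun P hP => (θiso P hP).hom
  simp only [flat_eq] at key
  exact key

/-- Rafael-type characterization of twisted separability for a right
adjoint functor `G`.  Here `Θ : C ≌ C` is an (adjoint) equivalence, with
`u = Θ.counitIso.inv : 1_C ⟶ ΘΘ⁻¹` and `v = Θ.unitIso.inv : Θ⁻¹Θ ⟶ 1_C`. -/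
theorem twisted_separable_right_adjoint_iff
    {C D : Type*} [Category C] [Category D]
    (F : C ⥤ D) (G : D ⥤ C) (adj : F ⊣ G)
    (Θ : C ≌ C) (𝓕 : Set D) (hgen : IsGeneratingClass 𝓕)
    (θiso : ∀ P : D, P ∈ 𝓕 → (G.obj P ≅ Θ.functor.obj (G.obj P))) :
    (∃ M : ∀ X Y : D, (G.obj X ⟶ Θ.functor.obj (G.obj Y)) → (X ⟶ Y),
      (∀ (X' X Y Y' : D) (α : X' ⟶ X) (β : Y ⟶ Y')
        (f : G.obj X ⟶ Θ.functor.obj (G.obj Y)),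
          α ≫ M X Y f ≫ β = M X' Y' (G.map α ≫ f ≫ Θ.functor.map (G.map β))) ∧
      (∀ (P : D) (hP : P ∈ 𝓕), M P P (θiso P hP).hom = 𝟙 P)) ↔
    (∃ ξ : 𝟭 D ⟶ G ⋙ Θ.inverse ⋙ F,
      ∀ (P : D) (hP : P ∈ 𝓕),
        ξ.app P ≫
          F.map (Θ.inverse.map (θiso P hP).hom ≫ Θ.unitIso.inv.app (G.obj P)) ≫
            adj.counit.app P = 𝟙 P) :=
  twisted_separable_right_adjoint_iff_general F G adj Θ 𝓕 θiso
end

section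
/- Let A be a Hopf algebra and R a left A-Galois object. The canonical functor F_R : A-Mod → R-Bimod, V ↦ V ⊙ R, is separable if and only if there exists a linear map ψ : R → k with ψ(1) = 1 such that ψ(a^{[1]} x a^{[2]}) = ε(a)ψ(x) for all x ∈ R and a ∈ A (i.e. ψ is A-linear for the Miyashita–Ulbrich action). -/
open TensorProduct

universe u

section ComoduleAlgebra

variable (k : Type u) [Field k]
variable (A : Type u) [Ring A] [Bialgebra k A]
variable (R : Type u) [Ring R] [Algebra k R]

/-- The coaction `ρ : R → A ⊗ R` is coassociative. -/
def CoactionCoassoc (ρ : R →ₐ[k] A ⊗[k] R) : Prop :=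
  ∀ x : R,
    (TensorProduct.map (Coalgebra.comul (R := k) (A := A)) (LinearMap.id : R →ₗ[k] R)) (ρ x) =
      (TensorProduct.assoc k A A R).symm
        ((TensorProduct.map (LinearMap.id : A →ₗ[k] A) ρ.toLinearMap) (ρ x))

/-- The coaction `ρ : R → A ⊗ R` is counital. -/
def CoactionCounital (ρ : R →ₐ[k] A ⊗[k] R) : Prop :=
  ∀ x : R,
    (TensorProduct.lid k R)
      ((TensorProduct.map (Coalgebra.counit (R := k) (A := A)) (LinearMap.id : R →ₗ[k] R))
        (ρ x)) = x

/-- The canonical map `can : R ⊗ R → A ⊗ R`, `x ⊗ y ↦ x₍₋₁₎ ⊗ x₍₀₎y`. -/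
noncomputable def canMap (ρ : R →ₐ[k] A ⊗[k] R) : R ⊗[k] R →ₗ[k] A ⊗[k] R :=
  (TensorProduct.map (LinearMap.id : A →ₗ[k] A) (LinearMap.mul' k R)).comp
    (((TensorProduct.assoc k A R R).toLinearMap).comp
      (TensorProduct.map ρ.toLinearMap (LinearMap.id : R →ₗ[k] R)))

variable {k A R}

/-- The left `R`-action on `V ⊗ R` given by `x · (v ⊗ y) = x₍₋₁₎·v ⊗ x₍₀₎y`. -/
noncomputable def lAct (V : Type u) [AddCommGroup V] [Module k V] [Module A V]
    [IsScalarTower k A V] (ρ : R →ₐ[k] A ⊗[k] R) :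
    R →ₗ[k] (V ⊗[k] R) →ₗ[k] (V ⊗[k] R) :=
  (TensorProduct.lift
    (((TensorProduct.mapBilinear (RingHom.id k) V R V R).comp
        (Algebra.lsmul k k V : A →ₐ[k] Module.End k V).toLinearMap).compl₂
      (LinearMap.mul k R))).comp ρ.toLinearMap

/-- The right `R`-action on `V ⊗ R` given by `(v ⊗ y) · z = v ⊗ yz`. -/
noncomputable def rAct (V : Type u) [AddCommGroup V] [Module k V] :
    R →ₗ[k] (V ⊗[k] R) →ₗ[k] (V ⊗[k] R) :=
  ((TensorProduct.mapBilinear (RingHom.id k) V R V R) (LinearMap.id : V →ₗ[k] V)).comp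
    (LinearMap.mul k R).flip

/-- A morphism of the canonical `R`-bimodules `V ⊙ R → W ⊙ R`. -/
def IsBimodHom (ρ : R →ₐ[k] A ⊗[k] R)
    (V : Type u) [AddCommGroup V] [Module k V] [Module A V] [IsScalarTower k A V]
    (W : Type u) [AddCommGroup W] [Module k W] [Module A W] [IsScalarTower k A W]
    (f : (V ⊗[k] R) →ₗ[k] (W ⊗[k] R)) : Prop :=
  (∀ (x : R) (w : V ⊗[k] R), f (lAct V ρ x w) = lAct W ρ x (f w)) ∧
  (∀ (z : R) (w : V ⊗[k] R), f (rAct (k := k) (R := R) V z w) = rAct (k := k) (R := R) W z (f w))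

end ComoduleAlgebra

/-
Given a splitting `M`, give `R` the Miyashita–Ulbrich action and `k` the trivial action through
`ε`. Then `R ⊙ R → k ⊙ R`, `x ⊗ y ↦ 1 ⊗ xy` is a bimodule map, because
`x v = (x_{(-1)} ▷ v) x_{(0)}`, and `ψ` is the `A`-linear map that `M` assigns to it. Naturality
along the `A`-linear unit `k → R`, together with `M(id) = id`, forces `ψ(1) = 1`.

Conversely, `M_{V,W}(f) = (id ⊗ ψ) ∘ f ∘ (v ↦ v ⊗ 1)` is natural and normalised. It is `A`-linear
because `(a • v) ⊗ 1 = a^{[1]} · (v ⊗ 1) · a^{[2]}` and a bimodule map commutes with this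
two-sided action; then `a^{[1]}_{(-1)} ⊗ a^{[1]}_{(0)} ⊗ a^{[2]} =
a_{(1)} ⊗ a_{(2)}^{[1]} ⊗ a_{(2)}^{[2]}` and the invariance of `ψ` turn
`(id ⊗ ψ)(a^{[1]} · u · a^{[2]})` into `a • (id ⊗ ψ)(u)`.
-/

namespace GaloisObject

variable {k : Type u} [Field k] {A : Type u} [Ring A] [Bialgebra k A]
  {R : Type u} [Ring R] [Algebra k R] (ρ : R →ₐ[k] A ⊗[k] R)

/-- `(u ⊗ v) x ↦ u x v`, written as `mul' ∘ (mulRight x ⊗ id)`, the form used in the theorem. -/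
noncomputable def sandwichMul : R ⊗[k] R →ₗ[k] R →ₗ[k] R :=
  LinearMap.mk₂ k
    (fun s x => LinearMap.mul' k R (map (LinearMap.mulRight k x) LinearMap.id s))
    (by simp) (by simp)
    (fun s x y => by
      rw [show LinearMap.mulRight k (x + y) = LinearMap.mulRight k x + LinearMap.mulRight k y by
        ext; simp [mul_add], TensorProduct.map_add_left, LinearMap.add_apply, map_add])
    (fun c s x => by
      rw [show LinearMap.mulRight k (c • x) = c • LinearMap.mulRight k x by ext; simp,
        TensorProduct.map_smul_left, LinearMap.smul_apply, map_smul])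

@[simp] lemma sandwichMul_tmul (u v x : R) : sandwichMul (u ⊗ₜ[k] v) x = u * x * v := by
  simp [sandwichMul]

lemma sandwichMul_one (s : R ⊗[k] R) : sandwichMul s 1 = LinearMap.mul' k R s := by
  induction s using TensorProduct.induction_on with
  | zero => simp
  | add s t hs ht => simp [hs, ht]
  | tmul x y => simp

lemma sandwichMul_lTensor_mulRight (z v : R) (s : R ⊗[k] R) :
    sandwichMul (LinearMap.lTensor R (LinearMap.mulRight k z) s) v = sandwichMul s v * z := by
  induction s using TensorProduct.induction_on with
  | zero => simp
  | add s t hs ht => simp [hs, ht, add_mul]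
  | tmul x y => simp [mul_assoc]

/-- Multiplication of `R ⊗ Rᵐᵒᵖ`. -/
noncomputable def envMul : R ⊗[k] R →ₗ[k] R ⊗[k] R →ₗ[k] R ⊗[k] R :=
  lift
    (((TensorProduct.mapBilinear (RingHom.id k) R R R R).comp (LinearMap.mul k R)).compl₂
      (LinearMap.mul k R).flip)

@[simp] lemma envMul_tmul (x y u v : R) :
    envMul (x ⊗ₜ[k] y) (u ⊗ₜ[k] v) = (x * u) ⊗ₜ[k] (v * y) := by
  simp [envMul, TensorProduct.mapBilinear_apply]

lemma sandwichMul_envMul (s t : R ⊗[k] R) :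
    sandwichMul (envMul s t) = sandwichMul s ∘ₗ sandwichMul t := by
  induction s using TensorProduct.induction_on with
  | zero => ext; simp
  | add s₁ s₂ h₁ h₂ => simp [h₁, h₂, LinearMap.add_comp]
  | tmul x y =>
    induction t using TensorProduct.induction_on with
    | zero => ext; simp
    | add t₁ t₂ h₁ h₂ => simp [h₁, h₂, LinearMap.comp_add]
    | tmul u v => ext; simp [mul_assoc]

lemma canMap_tmul (x y : R) : canMap k A R ρ (x ⊗ₜ y) = ρ x * (1 ⊗ₜ y) := by
  suffices ∀ t : A ⊗[k] R, map LinearMap.id (LinearMap.mul' k R)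
      (TensorProduct.assoc k A R R (t ⊗ₜ y)) = t * (1 ⊗ₜ y) from this (ρ x)
  intro t
  induction t using TensorProduct.induction_on with
  | zero => simp
  | add s t hs ht => simp [TensorProduct.add_tmul, hs, ht, add_mul]
  | tmul b r => simp

lemma canMap_tmul_eq_map (x y : R) :
    canMap k A R ρ (x ⊗ₜ y) = map LinearMap.id (LinearMap.mulRight k y) (ρ x) := by
  rw [canMap_tmul]
  induction ρ x using TensorProduct.induction_on with
  | zero => simp
  | add s t hs ht => simp [hs, ht, add_mul]
  | tmul b r => simp

lemma canMap_lTensor_mulRight (z : R) (s : R ⊗[k] R) :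
    canMap k A R ρ (LinearMap.lTensor R (LinearMap.mulRight k z) s) =
      canMap k A R ρ s * (1 ⊗ₜ z) := by
  induction s using TensorProduct.induction_on with
  | zero => simp
  | add s t hs ht => simp [hs, ht, add_mul]
  | tmul x y => simp [canMap_tmul, mul_assoc]

lemma canMap_envMul_tmul (x y : R) (t : R ⊗[k] R) :
    canMap k A R ρ (envMul (x ⊗ₜ y) t) = ρ x * canMap k A R ρ t * (1 ⊗ₜ y) := by
  induction t using TensorProduct.induction_on with
  | zero => simp
  | add s t hs ht => simp [hs, ht, mul_add, add_mul]
  | tmul u v =>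
    simp only [envMul_tmul, canMap_tmul, map_mul, mul_assoc,
      Algebra.TensorProduct.tmul_mul_tmul, mul_one]

lemma mul'_eq_lid_map_counit_canMap (hcounit : CoactionCounital k A R ρ) (s : R ⊗[k] R) :
    LinearMap.mul' k R s =
      TensorProduct.lid k R (map (Coalgebra.counit (R := k) (A := A)) LinearMap.id
        (canMap k A R ρ s)) := by
  have hmul : ∀ (t : A ⊗[k] R) (y : R),
      TensorProduct.lid k R (map (Coalgebra.counit (R := k) (A := A)) LinearMap.id
        (t * (1 ⊗ₜ y))) =
      TensorProduct.lid k R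
        (map (Coalgebra.counit (R := k) (A := A)) LinearMap.id t) * y := by
    intro t y
    induction t using TensorProduct.induction_on with
    | zero => simp
    | add s t hs ht => simp [hs, ht, add_mul]
    | tmul c r => simp
  induction s using TensorProduct.induction_on with
  | zero => simp
  | add s t hs ht => simp [hs, ht]
  | tmul x y => rw [canMap_tmul, hmul, hcounit x, LinearMap.mul'_apply]

/-- `can` is a morphism of left `A`-comodules. -/
lemma map_canMap_assoc_map (hcoassoc : CoactionCoassoc k A R ρ) (s : R ⊗[k] R) :
    map LinearMap.id (canMap k A R ρ)
        (TensorProduct.assoc k A R R (map ρ.toLinearMap LinearMap.id s)) =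
      TensorProduct.assoc k A A R
        (map (Coalgebra.comul (R := k) (A := A)) LinearMap.id
          (canMap k A R ρ s)) := by
  induction s using TensorProduct.induction_on with
  | zero => simp
  | add s t hs ht => simp only [map_add, hs, ht]
  | tmul x y =>
    have hleft : ∀ t : A ⊗[k] R,
        map LinearMap.id (canMap k A R ρ) (TensorProduct.assoc k A R R (t ⊗ₜ y)) =
          map LinearMap.id (map LinearMap.id (LinearMap.mulRight k y))
            (map LinearMap.id ρ.toLinearMap t) := by
      intro t
      induction t using TensorProduct.induction_on with
      | zero => simp
      | add s t hs ht => simp only [TensorProduct.add_tmul, map_add, hs, ht]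
      | tmul b r => simp [canMap_tmul_eq_map]
    have hcomm : ∀ u : A ⊗[k] R,
        map (Coalgebra.comul (R := k) (A := A)) LinearMap.id
          (map LinearMap.id (LinearMap.mulRight k y) u) =
        map LinearMap.id (LinearMap.mulRight k y)
          (map (Coalgebra.comul (R := k) (A := A)) LinearMap.id u) := by
      intro u
      simp only [TensorProduct.map_map, LinearMap.comp_id, LinearMap.id_comp]
    have hassoc : ∀ v : A ⊗[k] (A ⊗[k] R),
        TensorProduct.assoc k A A R (map LinearMap.id (LinearMap.mulRight k y)
          ((TensorProduct.assoc k A A R).symm v)) =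
        map LinearMap.id
          (map LinearMap.id (LinearMap.mulRight k y)) v := by
      intro v
      have h := TensorProduct.map_map_assoc_symm (LinearMap.id : A →ₗ[k] A)
        (LinearMap.id : A →ₗ[k] A) (LinearMap.mulRight k y) v
      rw [TensorProduct.map_id] at h
      rw [h, LinearEquiv.apply_symm_apply]
    rw [TensorProduct.map_tmul, AlgHom.toLinearMap_apply, LinearMap.id_apply, hleft,
      canMap_tmul_eq_map, hcomm, hcoassoc x, hassoc]

section Translation

variable (hGal : Function.Bijective (canMap k A R ρ))

noncomputable abbrev canEquiv : R ⊗[k] R ≃ₗ[k] A ⊗[k] R := LinearEquiv.ofBijective _ hGal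

/-- The translation map `κ(a) = a^{[1]} ⊗ a^{[2]}`. -/
noncomputable def translation : A →ₗ[k] R ⊗[k] R :=
  (canEquiv ρ hGal).symm.toLinearMap ∘ₗ (mk k A R).flip 1

lemma canMap_translation (a : A) : canMap k A R ρ (translation ρ hGal a) = a ⊗ₜ 1 :=
  (canEquiv ρ hGal).apply_symm_apply _

lemma translation_one : translation ρ hGal 1 = 1 ⊗ₜ 1 :=
  hGal.injective <| by simp [canMap_translation, canMap_tmul]

lemma translation_mul (a b : A) :
    translation ρ hGal (a * b) = envMul (translation ρ hGal a) (translation ρ hGal b) := by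
  have hmul : ∀ (t : A ⊗[k] R) (y : R),
      LinearMap.rTensor R (LinearMap.mulRight k b) (t * (1 ⊗ₜ y)) =
        t * (b ⊗ₜ 1) * (1 ⊗ₜ y) := by
    intro t y
    induction t using TensorProduct.induction_on with
    | zero => simp
    | add s t hs ht => simp [hs, ht, add_mul]
    | tmul c r => simp
  have hcan : ∀ s, canMap k A R ρ (envMul s (translation ρ hGal b)) =
      LinearMap.rTensor R (LinearMap.mulRight k b) (canMap k A R ρ s) := by
    intro s
    induction s using TensorProduct.induction_on with
    | zero => simp
    | add s t hs ht => simp [hs, ht]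
    | tmul x y => rw [canMap_envMul_tmul, canMap_translation, canMap_tmul, hmul]
  apply hGal.injective
  rw [hcan, canMap_translation, canMap_translation]
  simp

lemma canEquiv_symm_tmul (b : A) (r : R) :
    (canEquiv ρ hGal).symm (b ⊗ₜ r) =
      LinearMap.lTensor R (LinearMap.mulRight k r) (translation ρ hGal b) :=
  (canEquiv ρ hGal).symm_apply_eq.mpr <| by
    simp [canMap_lTensor_mulRight, canMap_translation]

lemma canEquiv_symm_apply_self (x : R) : (canEquiv ρ hGal).symm (ρ x) = x ⊗ₜ 1 :=
  (canEquiv ρ hGal).symm_apply_eq.mpr <| by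
    simp [canMap_tmul, ← Algebra.TensorProduct.one_def]

/-- The Miyashita–Ulbrich action `a ▷ x = a^{[1]} x a^{[2]}`. -/
noncomputable def miyashitaUlbrich : A →ₐ[k] Module.End k R :=
  AlgHom.ofLinearMap (sandwichMul ∘ₗ translation ρ hGal)
    (by ext; simp [translation_one])
    (fun a b => by simp [translation_mul, sandwichMul_envMul, Module.End.mul_eq_comp])

lemma sandwichMul_translation_algebraMap (hcounit : CoactionCounital k A R ρ) (a : A) (c : k) :
    sandwichMul (translation ρ hGal a) (algebraMap k R c) =
      algebraMap k R (Coalgebra.counit (R := k) a * c) := by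
  rw [Algebra.algebraMap_eq_smul_one, Algebra.algebraMap_eq_smul_one, map_smul, sandwichMul_one,
    mul'_eq_lid_map_counit_canMap ρ hcounit, canMap_translation]
  simp [mul_comm, mul_smul]

/-- `a^{[1]}_{(-1)} ⊗ a^{[1]}_{(0)} ⊗ a^{[2]} = a_{(1)} ⊗ a_{(2)}^{[1]} ⊗ a_{(2)}^{[2]}`. -/
lemma assoc_map_translation (hcoassoc : CoactionCoassoc k A R ρ) (a : A) :
    TensorProduct.assoc k A R R (map ρ.toLinearMap LinearMap.id (translation ρ hGal a)) =
      map LinearMap.id (translation ρ hGal) (Coalgebra.comul (R := k) (A := A) a) := by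
  have hinj : Function.Injective (map (LinearMap.id : A →ₗ[k] A) (canMap k A R ρ)) :=
    (LinearEquiv.lTensor A (canEquiv ρ hGal)).injective
  have hκ : canMap k A R ρ ∘ₗ translation ρ hGal = (mk k A R).flip 1 := by
    ext b
    exact canMap_translation ρ hGal b
  have hassoc : ∀ u : A ⊗[k] A,
      map LinearMap.id ((mk k A R).flip 1) u = TensorProduct.assoc k A A R (u ⊗ₜ 1) := by
    intro u
    induction u using TensorProduct.induction_on with
    | zero => simp
    | add s t hs ht => simp only [map_add, TensorProduct.add_tmul, hs, ht]
    | tmul b c => simp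
  apply hinj
  rw [map_canMap_assoc_map ρ hcoassoc, canMap_translation, TensorProduct.map_tmul,
    TensorProduct.map_map, hκ, LinearMap.id_comp, hassoc, LinearMap.id_apply]

end Translation

@[simp] lemma rAct_tmul {V : Type u} [AddCommGroup V] [Module k V] (z : R) (v : V) (y : R) :
    rAct (k := k) (R := R) V z (v ⊗ₜ[k] y) = v ⊗ₜ[k] (y * z) := by
  simp [rAct, TensorProduct.mapBilinear_apply]

noncomputable def contract (V : Type u) [AddCommGroup V] [Module k V] (ψ : R →ₗ[k] k) :
    V ⊗[k] R →ₗ[k] V :=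
  TensorProduct.rid k V ∘ₗ LinearMap.lTensor V ψ

@[simp] lemma contract_tmul {V : Type u} [AddCommGroup V] [Module k V] (ψ : R →ₗ[k] k) (v : V)
    (r : R) : contract V ψ (v ⊗ₜ r) = ψ r • v := by
  simp [contract]

lemma contract_map {V W : Type u} [AddCommGroup V] [Module k V] [AddCommGroup W] [Module k W]
    (ψ : R →ₗ[k] k) (β : V →ₗ[k] W) (u : V ⊗[k] R) :
    contract W ψ (map β LinearMap.id u) = β (contract V ψ u) := by
  induction u using TensorProduct.induction_on with
  | zero => simp
  | add s t hs ht => simp only [map_add, hs, ht]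
  | tmul v r => simp

section Bimodule

variable {V : Type u} [AddCommGroup V] [Module k V] [Module A V] [IsScalarTower k A V]
  {W : Type u} [AddCommGroup W] [Module k W] [Module A W] [IsScalarTower k A W]

variable (V) in
noncomputable def tensorAct : A ⊗[k] R →ₗ[k] (V ⊗[k] R) →ₗ[k] (V ⊗[k] R) :=
  lift
    (((TensorProduct.mapBilinear (RingHom.id k) V R V R).comp
        (Algebra.lsmul k k V : A →ₐ[k] Module.End k V).toLinearMap).compl₂
      (LinearMap.mul k R))

lemma lAct_eq_tensorAct (x : R) : lAct V ρ x = tensorAct V (ρ x) := rfl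

@[simp] lemma tensorAct_tmul_tmul (b : A) (r : R) (v : V) (y : R) :
    tensorAct V (b ⊗ₜ[k] r) (v ⊗ₜ[k] y) = (b • v) ⊗ₜ[k] (r * y) := by
  simp [tensorAct, TensorProduct.mapBilinear_apply]

/-- `x v = (x_{(-1)} ▷ v) x_{(0)}`. -/
lemma mul'_lAct [Module A R] [IsScalarTower k A R] (hGal : Function.Bijective (canMap k A R ρ))
    (hR : ∀ (a : A) (x : R), a • x = sandwichMul (translation ρ hGal a) x) (x v y : R) :
    LinearMap.mul' k R (lAct R ρ x (v ⊗ₜ y)) = x * v * y := by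
  have key : ∀ t : A ⊗[k] R, LinearMap.mul' k R (tensorAct R t (v ⊗ₜ y)) =
      sandwichMul ((canEquiv ρ hGal).symm t) v * y := by
    intro t
    induction t using TensorProduct.induction_on with
    | zero => simp
    | add s t hs ht => simp only [map_add, LinearMap.add_apply, hs, ht, add_mul]
    | tmul b r =>
      rw [tensorAct_tmul_tmul, LinearMap.mul'_apply, canEquiv_symm_tmul,
        sandwichMul_lTensor_mulRight, hR, mul_assoc]
  rw [lAct_eq_tensorAct, key, canEquiv_symm_apply_self, sandwichMul_tmul, mul_one]

lemma lAct_one_tmul [Module A k] [IsScalarTower k A k] (hcounit : CoactionCounital k A R ρ)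
    (hk : ∀ (a : A) (c : k), a • c = Coalgebra.counit (R := k) a * c) (x z : R) :
    lAct k ρ x (1 ⊗ₜ z) = 1 ⊗ₜ (x * z) := by
  have key : ∀ t : A ⊗[k] R, tensorAct k t (1 ⊗ₜ z) =
      1 ⊗ₜ (TensorProduct.lid k R (map (Coalgebra.counit (R := k) (A := A))
        LinearMap.id t) * z) := by
    intro t
    induction t using TensorProduct.induction_on with
    | zero => simp
    | add s t hs ht =>
      simp only [map_add, LinearMap.add_apply, hs, ht, add_mul, TensorProduct.tmul_add]
    | tmul b r => simp [hk, TensorProduct.smul_tmul']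
  rw [lAct_eq_tensorAct, key, hcounit x]

lemma isBimodHom_lid_symm_mul' [Module A R] [IsScalarTower k A R] [Module A k]
    [IsScalarTower k A k] (hcounit : CoactionCounital k A R ρ)
    (hGal : Function.Bijective (canMap k A R ρ))
    (hR : ∀ (a : A) (x : R), a • x = sandwichMul (translation ρ hGal a) x)
    (hk : ∀ (a : A) (c : k), a • c = Coalgebra.counit (R := k) a * c) :
    IsBimodHom ρ R k ((TensorProduct.lid k R).symm.toLinearMap ∘ₗ LinearMap.mul' k R) := by
  constructor
  · intro x s
    induction s using TensorProduct.induction_on with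
    | zero => simp
    | add s t hs ht => simp only [map_add, hs, ht]
    | tmul v y =>
      simp only [LinearMap.comp_apply, LinearEquiv.coe_coe, mul'_lAct ρ hGal hR,
        LinearMap.mul'_apply, TensorProduct.lid_symm_apply, lAct_one_tmul ρ hcounit hk,
        mul_assoc]
  · intro z s
    induction s using TensorProduct.induction_on with
    | zero => simp
    | add s t hs ht => simp only [map_add, hs, ht]
    | tmul v y => simp [mul_assoc]

variable (V) in
noncomputable def twoSidedAct : R ⊗[k] R →ₗ[k] (V ⊗[k] R) →ₗ[k] (V ⊗[k] R) :=
  lift ((LinearMap.mul k (Module.End k (V ⊗[k] R))).compl₁₂ (lAct V ρ) (rAct V))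

lemma twoSidedAct_tmul (x y : R) (u : V ⊗[k] R) :
    twoSidedAct ρ V (x ⊗ₜ y) u = lAct V ρ x (rAct V y u) := rfl

lemma twoSidedAct_tmul_one (s : R ⊗[k] R) (v : V) :
    twoSidedAct ρ V s (v ⊗ₜ 1) =
      map ((LinearMap.toSpanSingleton A V v).restrictScalars k) LinearMap.id
        (canMap k A R ρ s) := by
  have key : ∀ (t : A ⊗[k] R) (y : R), tensorAct V t (v ⊗ₜ y) =
      map ((LinearMap.toSpanSingleton A V v).restrictScalars k) LinearMap.id
        (t * (1 ⊗ₜ y)) := by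
    intro t y
    induction t using TensorProduct.induction_on with
    | zero => simp
    | add s t hs ht => simp only [map_add, LinearMap.add_apply, hs, ht, add_mul]
    | tmul b r => simp
  induction s using TensorProduct.induction_on with
  | zero => simp
  | add s t hs ht => simp only [map_add, LinearMap.add_apply, hs, ht]
  | tmul x y => rw [twoSidedAct_tmul, rAct_tmul, one_mul, lAct_eq_tensorAct, key, canMap_tmul]

lemma IsBimodHom.map_twoSidedAct {f : (V ⊗[k] R) →ₗ[k] (W ⊗[k] R)}
    (hf : IsBimodHom ρ V W f) (s : R ⊗[k] R) (u : V ⊗[k] R) :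
    f (twoSidedAct ρ V s u) = twoSidedAct ρ W s (f u) := by
  induction s using TensorProduct.induction_on with
  | zero => simp
  | add s t hs ht => simp only [map_add, LinearMap.add_apply, hs, ht]
  | tmul x y => rw [twoSidedAct_tmul, twoSidedAct_tmul, hf.1, hf.2]

variable (ψ : R →ₗ[k] k)

lemma contract_twoSidedAct_tmul (s : R ⊗[k] R) (w : W) (r : R) :
    contract W ψ (twoSidedAct ρ W s (w ⊗ₜ r)) =
      TensorProduct.rid k W
        (map ((LinearMap.toSpanSingleton A W w).restrictScalars k)
          (ψ ∘ₗ sandwichMul.flip r)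
          (TensorProduct.assoc k A R R (map ρ.toLinearMap LinearMap.id s))) := by
  induction s using TensorProduct.induction_on with
  | zero => simp
  | add s t hs ht => simp only [map_add, LinearMap.add_apply, hs, ht]
  | tmul x y =>
    rw [twoSidedAct_tmul, rAct_tmul, lAct_eq_tensorAct, TensorProduct.map_tmul,
      AlgHom.toLinearMap_apply, LinearMap.id_apply]
    induction ρ x using TensorProduct.induction_on with
    | zero => simp
    | add s t hs ht => simp only [map_add, LinearMap.add_apply, hs, ht, TensorProduct.add_tmul]
    | tmul b q => simp [mul_assoc]

lemma contract_twoSidedAct_translation (hcoassoc : CoactionCoassoc k A R ρ)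
    (hGal : Function.Bijective (canMap k A R ρ))
    (hψ : ∀ (a : A) (x : R),
      ψ (sandwichMul (translation ρ hGal a) x) = Coalgebra.counit (R := k) a * ψ x)
    (a : A) (u : W ⊗[k] R) :
    contract W ψ (twoSidedAct ρ W (translation ρ hGal a) u) = a • contract W ψ u := by
  induction u using TensorProduct.induction_on with
  | zero => simp
  | add u₁ u₂ h₁ h₂ => simp only [map_add, h₁, h₂, smul_add]
  | tmul w r =>
    have hcounit : ψ ∘ₗ sandwichMul.flip r ∘ₗ translation ρ hGal =
        ψ r • Coalgebra.counit (R := k) := by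
      ext b
      simp [hψ, mul_comm]
    have hrid : ∀ u : A ⊗[k] A, TensorProduct.rid k W (map
          ((LinearMap.toSpanSingleton A W w).restrictScalars k) (Coalgebra.counit (R := k)) u) =
        TensorProduct.rid k A (LinearMap.lTensor A (Coalgebra.counit (R := k)) u) • w := by
      intro u
      induction u using TensorProduct.induction_on with
      | zero => simp
      | add s t hs ht => simp only [map_add, hs, ht, add_smul]
      | tmul b c => simp [smul_assoc]
    rw [contract_twoSidedAct_tmul, assoc_map_translation ρ hGal hcoassoc, TensorProduct.map_map,
      LinearMap.comp_id, LinearMap.comp_assoc, hcounit, TensorProduct.map_smul_right,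
      LinearMap.smul_apply, map_smul, hrid, Coalgebra.lTensor_counit_comul,
      TensorProduct.rid_tmul, one_smul, contract_tmul, smul_comm]

/-- `(a • v) ⊗ 1 = a^{[1]} · (v ⊗ 1) · a^{[2]}`, and bimodule maps commute with this. -/
lemma contract_map_smul_tmul_one (hcoassoc : CoactionCoassoc k A R ρ)
    (hGal : Function.Bijective (canMap k A R ρ))
    (hψ : ∀ (a : A) (x : R),
      ψ (sandwichMul (translation ρ hGal a) x) = Coalgebra.counit (R := k) a * ψ x)
    {f : (V ⊗[k] R) →ₗ[k] (W ⊗[k] R)} (hf : IsBimodHom ρ V W f) (a : A) (v : V) :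
    contract W ψ (f ((a • v) ⊗ₜ 1)) = a • contract W ψ (f (v ⊗ₜ 1)) := by
  have hsandwich :
      (a • v) ⊗ₜ[k] (1 : R) = twoSidedAct ρ V (translation ρ hGal a) (v ⊗ₜ 1) := by
    rw [twoSidedAct_tmul_one, canMap_translation]
    simp
  rw [hsandwich, IsBimodHom.map_twoSidedAct ρ hf,
    contract_twoSidedAct_translation ρ ψ hcoassoc hGal hψ]

end Bimodule

abbrev moduleOfAlgHom {M : Type u} [AddCommGroup M] [Module k M] (φ : A →ₐ[k] Module.End k M) :
    Module A M :=
  Module.compHom M φ.toRingHom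

lemma isScalarTower_moduleOfAlgHom {M : Type u} [AddCommGroup M] [Module k M]
    (φ : A →ₐ[k] Module.End k M) :
    letI := moduleOfAlgHom φ
    IsScalarTower k A M :=
  letI := moduleOfAlgHom φ
  ⟨fun c a x => LinearMap.congr_fun (map_smul φ c a) x⟩

end GaloisObject

open GaloisObject

theorem galois_canonical_functor_separable_iff_general
    {k : Type u} [Field k] {A : Type u} [Ring A] [Bialgebra k A]
    {R : Type u} [Ring R] [Algebra k R]
    (ρ : R →ₐ[k] A ⊗[k] R) (hcoassoc : CoactionCoassoc k A R ρ)
    (hcounit : CoactionCounital k A R ρ)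
    (hGal : Function.Bijective (canMap k A R ρ)) :
    (∃ M : ∀ (V : Type u) [AddCommGroup V] [Module k V] [Module A V] [IsScalarTower k A V]
        (W : Type u) [AddCommGroup W] [Module k W] [Module A W] [IsScalarTower k A W],
        ((V ⊗[k] R) →ₗ[k] (W ⊗[k] R)) → (V →ₗ[k] W),
      -- `M` sends bimodule morphisms to `A`-linear maps
      (∀ (V : Type u) [AddCommGroup V] [Module k V] [Module A V] [IsScalarTower k A V]
        (W : Type u) [AddCommGroup W] [Module k W] [Module A W] [IsScalarTower k A W]
        (f : (V ⊗[k] R) →ₗ[k] (W ⊗[k] R)), IsBimodHom ρ V W f →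
          ∀ (a : A) (v : V), M V W f (a • v) = a • M V W f v) ∧
      -- naturality of `M`
      (∀ (V' : Type u) [AddCommGroup V'] [Module k V'] [Module A V'] [IsScalarTower k A V']
        (V : Type u) [AddCommGroup V] [Module k V] [Module A V] [IsScalarTower k A V]
        (W : Type u) [AddCommGroup W] [Module k W] [Module A W] [IsScalarTower k A W]
        (W' : Type u) [AddCommGroup W'] [Module k W'] [Module A W'] [IsScalarTower k A W']
        (α : V' →ₗ[k] V) (_ : ∀ (a : A) (v : V'), α (a • v) = a • α v)
        (β : W →ₗ[k] W') (_ : ∀ (a : A) (w : W), β (a • w) = a • β w)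
        (f : (V ⊗[k] R) →ₗ[k] (W ⊗[k] R)), IsBimodHom ρ V W f →
          M V' W' ((TensorProduct.map β (LinearMap.id : R →ₗ[k] R)) ∘ₗ f ∘ₗ
              (TensorProduct.map α (LinearMap.id : R →ₗ[k] R))) =
            β ∘ₗ (M V W f) ∘ₗ α) ∧
      -- normalization: `M_{V,V}(id) = id`
      (∀ (V : Type u) [AddCommGroup V] [Module k V] [Module A V] [IsScalarTower k A V],
        M V V LinearMap.id = LinearMap.id)) ↔
    (∃ ψ : R →ₗ[k] k, ψ 1 = 1 ∧
      ∀ (a : A) (x : R),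
        ψ ((LinearMap.mul' k R)
          ((TensorProduct.map (LinearMap.mulRight k x) (LinearMap.id : R →ₗ[k] R))
            ((LinearEquiv.ofBijective (canMap k A R ρ) hGal).symm (a ⊗ₜ[k] (1 : R))))) =
          Coalgebra.counit (R := k) a * ψ x) := by
  constructor
  · rintro ⟨M, hM_smul, hM_natural, hM_id⟩
    let : Module A R := moduleOfAlgHom (miyashitaUlbrich ρ hGal)
    have : IsScalarTower k A R := isScalarTower_moduleOfAlgHom _
    let : Module A k := moduleOfAlgHom ((Algebra.ofId k _).comp (Bialgebra.counitAlgHom k A))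
    have : IsScalarTower k A k := isScalarTower_moduleOfAlgHom _
    have hf := isBimodHom_lid_symm_mul' ρ hcounit hGal (fun _ _ => rfl) (fun _ _ => rfl)
    have hunit_smul : ∀ (a : A) (c : k),
        Algebra.linearMap k R (a • c) = a • Algebra.linearMap k R c :=
      fun a c => (sandwichMul_translation_algebraMap ρ hGal hcounit a c).symm
    have hsplit : map LinearMap.id LinearMap.id ∘ₗ
        ((TensorProduct.lid k R).symm.toLinearMap ∘ₗ LinearMap.mul' k R) ∘ₗ
          map (Algebra.linearMap k R) LinearMap.id = LinearMap.id := by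
      ext; simp
    have hnat := hM_natural k R k k _ hunit_smul LinearMap.id (fun _ _ => rfl) _ hf
    rw [hsplit, hM_id] at hnat
    refine ⟨_, ?_, hM_smul R k _ hf⟩
    simpa using (LinearMap.congr_fun hnat 1).symm
  · rintro ⟨ψ, hψ_one, hψ⟩
    refine ⟨fun V _ _ _ _ W _ _ _ _ f => contract W ψ ∘ₗ f ∘ₗ (mk k V R).flip 1,
      fun V _ _ _ _ W _ _ _ _ f hf a v => contract_map_smul_tmul_one ρ ψ hcoassoc hGal hψ hf a v,
      fun V' _ _ _ _ V _ _ _ _ W _ _ _ _ W' _ _ _ _ α _ β _ f _ => ?_,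
      fun V _ _ _ _ => ?_⟩
    · ext v
      simp [contract_map]
    · ext v
      simp [hψ_one]

/-- for a left `A`-Galois object `R`, the canonical functor
`F_R : V ↦ V ⊙ R` from `A`-modules to `R`-bimodules is separable if and only if
there is a unital linear functional `ψ : R → k` which is `A`-linear for the
Miyashita–Ulbrich action, i.e. `ψ(a⁽¹⁾ x a⁽²⁾) = ε(a) ψ(x)`. -/
theorem galois_canonical_functor_separable_iff
    {k : Type u} [Field k] {A : Type u} [Ring A] [Bialgebra k A]
    {R : Type u} [Ring R] [Algebra k R] [Nontrivial R]
    (ρ : R →ₐ[k] A ⊗[k] R) (hcoassoc : CoactionCoassoc k A R ρ)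
    (hcounit : CoactionCounital k A R ρ)
    (hGal : Function.Bijective (canMap k A R ρ)) :
    (∃ M : ∀ (V : Type u) [AddCommGroup V] [Module k V] [Module A V] [IsScalarTower k A V]
        (W : Type u) [AddCommGroup W] [Module k W] [Module A W] [IsScalarTower k A W],
        ((V ⊗[k] R) →ₗ[k] (W ⊗[k] R)) → (V →ₗ[k] W),
      -- `M` sends bimodule morphisms to `A`-linear maps
      (∀ (V : Type u) [AddCommGroup V] [Module k V] [Module A V] [IsScalarTower k A V]
        (W : Type u) [AddCommGroup W] [Module k W] [Module A W] [IsScalarTower k A W]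
        (f : (V ⊗[k] R) →ₗ[k] (W ⊗[k] R)), IsBimodHom ρ V W f →
          ∀ (a : A) (v : V), M V W f (a • v) = a • M V W f v) ∧
      -- naturality of `M`
      (∀ (V' : Type u) [AddCommGroup V'] [Module k V'] [Module A V'] [IsScalarTower k A V']
        (V : Type u) [AddCommGroup V] [Module k V] [Module A V] [IsScalarTower k A V]
        (W : Type u) [AddCommGroup W] [Module k W] [Module A W] [IsScalarTower k A W]
        (W' : Type u) [AddCommGroup W'] [Module k W'] [Module A W'] [IsScalarTower k A W']
        (α : V' →ₗ[k] V) (_ : ∀ (a : A) (v : V'), α (a • v) = a • α v)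
        (β : W →ₗ[k] W') (_ : ∀ (a : A) (w : W), β (a • w) = a • β w)
        (f : (V ⊗[k] R) →ₗ[k] (W ⊗[k] R)), IsBimodHom ρ V W f →
          M V' W' ((TensorProduct.map β (LinearMap.id : R →ₗ[k] R)) ∘ₗ f ∘ₗ
              (TensorProduct.map α (LinearMap.id : R →ₗ[k] R))) =
            β ∘ₗ (M V W f) ∘ₗ α) ∧
      -- normalization: `M_{V,V}(id) = id`
      (∀ (V : Type u) [AddCommGroup V] [Module k V] [Module A V] [IsScalarTower k A V],
        M V V LinearMap.id = LinearMap.id)) ↔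
    (∃ ψ : R →ₗ[k] k, ψ 1 = 1 ∧
      ∀ (a : A) (x : R),
        ψ ((LinearMap.mul' k R)
          ((TensorProduct.map (LinearMap.mulRight k x) (LinearMap.id : R →ₗ[k] R))
            ((LinearEquiv.ofBijective (canMap k A R ρ) hGal).symm (a ⊗ₜ[k] (1 : R))))) =
          Coalgebra.counit (R := k) a * ψ x) :=
  galois_canonical_functor_separable_iff_general ρ hcoassoc hcounit hGal
end

section
/- Let C be a cogroupoid and X, Y objects of C. Then the map S_{Y,X} ∘ S_{X,Y} : C(X,Y) → C(X,Y) is left semi-C(X,X)-colinear with respect to the Hopf algebra automorphism S_{X,X}²; that is, for the left C(X,X)-comodule structure Δ_{X,Y}^X on C(X,Y), one has Δ_{X,Y}^X(S_{Y,X}S_{X,Y}(a)) = (S_{X,X}² ⊗ S_{Y,X}S_{X,Y})(Δ_{X,Y}^X(a)) for all a ∈ C(X,Y). -/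
/-!
Maps `f : C(U,W) → A`, `g : C(W,V) → A` into an algebra `A` have a convolution
`f ⋆ g = m ∘ (f ⊗ g) ∘ Δ^W`, which is associative with units `η ∘ ε`, so a left and a right
convolution inverse of the same map agree. In `A = C(Y,Z) ⊗ C(Z,X)` the map `Δ_{Y,X}^Z` has
`Δ_{Y,X}^Z ∘ S_{X,Y}` as a left inverse, since `Δ` is multiplicative, and
`(S_{Z,Y} ⊗ S_{X,Z}) ∘ τ ∘ Δ_{X,Y}^Z` as a right inverse: writing `Δ_{Y,X}^Z = ι₁ ⋆ ι₂` and
`(S ⊗ S) ∘ τ ∘ Δ = (ι₂ ∘ S) ⋆ (ι₁ ∘ S)` with the two tensor inclusions `ι₁, ι₂`, this follows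
from associativity and the antipode axioms alone. Hence `Δ ∘ S = (S ⊗ S) ∘ τ ∘ Δ`, and applying
this twice to `S_{Y,X} ∘ S_{X,Y}` gives the claim.
-/

open TensorProduct

namespace Cogroupoid

variable {k : Type*} [CommSemiring k] {ι : Type*} {Cg : ι → ι → Type*}
  [∀ U V, Semiring (Cg U V)] [∀ U V, Algebra k (Cg U V)]

section Axioms

variable (Δ : ∀ U V W, Cg U V →ₐ[k] Cg U W ⊗[k] Cg W V) (ε : ∀ U, Cg U U →ₐ[k] k)
  (S : ∀ U V, Cg U V →ₗ[k] Cg V U)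

def Coassociative : Prop :=
  ∀ (U V W T : ι) (a : Cg U V),
    map (Δ U W T).toLinearMap (LinearMap.id : Cg W V →ₗ[k] Cg W V) (Δ U V W a) =
      (TensorProduct.assoc k (Cg U T) (Cg T W) (Cg W V)).symm
        (map (LinearMap.id : Cg U T →ₗ[k] Cg U T) (Δ T V W).toLinearMap (Δ U V T a))

def LeftCounital : Prop :=
  ∀ (U V : ι) (a : Cg U V),
    TensorProduct.lid k (Cg U V)
      (map (ε U).toLinearMap (LinearMap.id : Cg U V →ₗ[k] Cg U V) (Δ U V U a)) = a

def RightCounital : Prop :=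
  ∀ (U V : ι) (a : Cg U V),
    TensorProduct.rid k (Cg U V)
      (map (LinearMap.id : Cg U V →ₗ[k] Cg U V) (ε V).toLinearMap (Δ U V V a)) = a

def LeftAntipode : Prop :=
  ∀ (U V : ι) (a : Cg U U),
    LinearMap.mul' k (Cg V U) (map (S U V) (LinearMap.id : Cg V U →ₗ[k] Cg V U) (Δ U U V a)) =
      ε U a • (1 : Cg V U)

def RightAntipode : Prop :=
  ∀ (U V : ι) (a : Cg U U),
    LinearMap.mul' k (Cg U V) (map (LinearMap.id : Cg U V →ₗ[k] Cg U V) (S V U) (Δ U U V a)) =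
      ε U a • (1 : Cg U V)

end Axioms

section Convolution

variable {A B B₁ B₂ : Type*} [Semiring A] [Algebra k A] [Semiring B] [Algebra k B]
  [Semiring B₁] [Algebra k B₁] [Semiring B₂] [Algebra k B₂]

def conv (Δ : ∀ U V W, Cg U V →ₐ[k] Cg U W ⊗[k] Cg W V) {U V : ι} (W : ι)
    (f : Cg U W →ₗ[k] A) (g : Cg W V →ₗ[k] A) : Cg U V →ₗ[k] A :=
  LinearMap.mul' k A ∘ₗ map f g ∘ₗ (Δ U V W).toLinearMap

variable (A) in
def convOne (ε : ∀ U, Cg U U →ₐ[k] k) (U : ι) : Cg U U →ₗ[k] A :=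
  Algebra.linearMap k A ∘ₗ (ε U).toLinearMap

variable {Δ : ∀ U V W, Cg U V →ₐ[k] Cg U W ⊗[k] Cg W V} {ε : ∀ U, Cg U U →ₐ[k] k}

theorem conv_apply {U V W : ι} (f : Cg U W →ₗ[k] A) (g : Cg W V →ₗ[k] A) (a : Cg U V) :
    conv Δ W f g a = LinearMap.mul' k A (map f g (Δ U V W a)) := rfl

theorem convOne_conv (h : LeftCounital Δ ε) {U V : ι} (g : Cg U V →ₗ[k] A) :
    conv Δ U (convOne A ε U) g = g := by
  have : LinearMap.mul' k A ∘ₗ map (convOne A ε U) g =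
      g ∘ₗ (TensorProduct.lid k (Cg U V)).toLinearMap ∘ₗ map (ε U).toLinearMap LinearMap.id := by
    ext x y
    simp [convOne, ← Algebra.smul_def]
  ext a
  simpa [conv_apply, h U V a] using LinearMap.congr_fun this (Δ U V U a)

theorem conv_convOne (h : RightCounital Δ ε) {U V : ι} (f : Cg U V →ₗ[k] A) :
    conv Δ V f (convOne A ε V) = f := by
  have : LinearMap.mul' k A ∘ₗ map f (convOne A ε V) =
      f ∘ₗ (TensorProduct.rid k (Cg U V)).toLinearMap ∘ₗ map LinearMap.id (ε V).toLinearMap := by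
    ext x y
    simp [convOne, ← Algebra.commutes, ← Algebra.smul_def]
  ext a
  simpa [conv_apply, h U V a] using LinearMap.congr_fun this (Δ U V V a)

theorem conv_assoc (h : Coassociative Δ) {U V W T : ι} (f : Cg U T →ₗ[k] A)
    (g : Cg T W →ₗ[k] A) (l : Cg W V →ₗ[k] A) :
    conv Δ W (conv Δ T f g) l = conv Δ T f (conv Δ W g l) := by
  have mul_assoc' : LinearMap.mul' k A ∘ₗ map (LinearMap.mul' k A ∘ₗ map f g) l ∘ₗ
      (TensorProduct.assoc k (Cg U T) (Cg T W) (Cg W V)).symm.toLinearMap =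
      LinearMap.mul' k A ∘ₗ map f (LinearMap.mul' k A ∘ₗ map g l) := by
    ext x y z
    simp [mul_assoc]
  ext a
  have key := LinearMap.congr_fun mul_assoc' (map LinearMap.id (Δ T V W).toLinearMap (Δ U V T a))
  rw [LinearMap.comp_apply, LinearMap.comp_apply, LinearEquiv.coe_coe, ← h] at key
  simpa only [conv, LinearMap.comp_apply, AlgHom.toLinearMap_apply, map_map, LinearMap.comp_id,
    LinearMap.comp_assoc] using key

theorem algHom_comp_conv (φ : B →ₐ[k] A) {U V W : ι}
    (f : Cg U W →ₗ[k] B) (g : Cg W V →ₗ[k] B) :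
    conv Δ W (φ.toLinearMap ∘ₗ f) (φ.toLinearMap ∘ₗ g) = φ.toLinearMap ∘ₗ conv Δ W f g := by
  have : LinearMap.mul' k A ∘ₗ map (φ.toLinearMap ∘ₗ f) (φ.toLinearMap ∘ₗ g) =
      φ.toLinearMap ∘ₗ LinearMap.mul' k B ∘ₗ map f g := by
    ext x y
    simp
  simp only [conv, ← LinearMap.comp_assoc, this]

theorem algHom_comp_convOne (φ : B →ₐ[k] A) (U : ι) :
    φ.toLinearMap ∘ₗ convOne B ε U = convOne A ε U := by
  ext a
  simp [convOne]

theorem conv_left_inv_eq_right_inv (hΔ : Coassociative Δ) (hl : LeftCounital Δ ε)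
    (hr : RightCounital Δ ε) {X Y : ι} {F G : Cg X Y →ₗ[k] A} {D : Cg Y X →ₗ[k] A}
    (hFD : conv Δ Y F D = convOne A ε X) (hDG : conv Δ X D G = convOne A ε Y) : F = G :=
  calc F = conv Δ Y F (convOne A ε Y) := (conv_convOne hr F).symm
    _ = conv Δ X (conv Δ Y F D) G := by rw [← hDG, conv_assoc hΔ]
    _ = G := by rw [hFD, convOne_conv hl]

open Algebra.TensorProduct in
theorem conv_includeLeft_includeRight {U V W : ι} (f : Cg U W →ₗ[k] B₁) (g : Cg W V →ₗ[k] B₂) :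
    conv Δ W ((includeLeft : B₁ →ₐ[k] B₁ ⊗[k] B₂).toLinearMap ∘ₗ f)
        ((includeRight : B₂ →ₐ[k] B₁ ⊗[k] B₂).toLinearMap ∘ₗ g) =
      map f g ∘ₗ (Δ U V W).toLinearMap := by
  have : LinearMap.mul' k (B₁ ⊗[k] B₂) ∘ₗ
      map ((includeLeft : B₁ →ₐ[k] B₁ ⊗[k] B₂).toLinearMap ∘ₗ f)
        ((includeRight : B₂ →ₐ[k] B₁ ⊗[k] B₂).toLinearMap ∘ₗ g) = map f g := by
    ext x y
    simp
  simp only [conv, ← LinearMap.comp_assoc, this]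

open Algebra.TensorProduct in
theorem conv_includeRight_includeLeft {U V W : ι} (f : Cg U W →ₗ[k] B₂) (g : Cg W V →ₗ[k] B₁) :
    conv Δ W ((includeRight : B₂ →ₐ[k] B₁ ⊗[k] B₂).toLinearMap ∘ₗ f)
        ((includeLeft : B₁ →ₐ[k] B₁ ⊗[k] B₂).toLinearMap ∘ₗ g) =
      (TensorProduct.comm k B₂ B₁).toLinearMap ∘ₗ map f g ∘ₗ (Δ U V W).toLinearMap := by
  have : LinearMap.mul' k (B₁ ⊗[k] B₂) ∘ₗ
      map ((includeRight : B₂ →ₐ[k] B₁ ⊗[k] B₂).toLinearMap ∘ₗ f)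
        ((includeLeft : B₁ →ₐ[k] B₁ ⊗[k] B₂).toLinearMap ∘ₗ g) =
      (TensorProduct.comm k B₂ B₁).toLinearMap ∘ₗ map f g := by
    ext x y
    simp
  simp only [conv, ← LinearMap.comp_assoc, this]

end Convolution

section Antipode

variable {Δ : ∀ U V W, Cg U V →ₐ[k] Cg U W ⊗[k] Cg W V} {ε : ∀ U, Cg U U →ₐ[k] k}
  {S : ∀ U V, Cg U V →ₗ[k] Cg V U}

theorem LeftAntipode.conv_eq (h : LeftAntipode Δ ε S) (U V : ι) :
    conv Δ V (S U V) LinearMap.id = convOne (Cg V U) ε U := by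
  ext a
  simp [conv_apply, convOne, h U V a, Algebra.algebraMap_eq_smul_one]

theorem RightAntipode.conv_eq (h : RightAntipode Δ ε S) (U V : ι) :
    conv Δ V LinearMap.id (S V U) = convOne (Cg U V) ε U := by
  ext a
  simp [conv_apply, convOne, h U V a, Algebra.algebraMap_eq_smul_one]

open Algebra.TensorProduct in
theorem comul_comp_antipode (hΔ : Coassociative Δ) (hl : LeftCounital Δ ε)
    (hr : RightCounital Δ ε) (hS₁ : LeftAntipode Δ ε S) (hS₂ : RightAntipode Δ ε S) (X Y Z : ι) :
    (Δ Y X Z).toLinearMap ∘ₗ S X Y =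
      map (S Z Y) (S X Z) ∘ₗ (TensorProduct.comm k (Cg X Z) (Cg Z Y)).toLinearMap ∘ₗ
        (Δ X Y Z).toLinearMap := by
  set L : Cg Y Z →ₐ[k] Cg Y Z ⊗[k] Cg Z X := includeLeft
  set R : Cg Z X →ₐ[k] Cg Y Z ⊗[k] Cg Z X := includeRight
  have hD : (Δ Y X Z).toLinearMap = conv Δ Z L.toLinearMap R.toLinearMap := by
    simpa only [LinearMap.comp_id, TensorProduct.map_id, LinearMap.id_comp] using
      (conv_includeLeft_includeRight (Δ := Δ) LinearMap.id LinearMap.id).symm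
  have hG : map (S Z Y) (S X Z) ∘ₗ (TensorProduct.comm k (Cg X Z) (Cg Z Y)).toLinearMap ∘ₗ
      (Δ X Y Z).toLinearMap = conv Δ Z (R.toLinearMap ∘ₗ S X Z) (L.toLinearMap ∘ₗ S Z Y) := by
    rw [conv_includeRight_includeLeft, ← LinearMap.comp_assoc, ← LinearMap.comp_assoc,
      map_comp_comm_eq]
  have hR : conv Δ X R.toLinearMap (R.toLinearMap ∘ₗ S X Z) = convOne _ ε Z := by
    simpa only [LinearMap.comp_id, hS₂.conv_eq, algHom_comp_convOne] using
      algHom_comp_conv (Δ := Δ) R LinearMap.id (S X Z)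
  have hL : conv Δ Z L.toLinearMap (L.toLinearMap ∘ₗ S Z Y) = convOne _ ε Y := by
    simpa only [LinearMap.comp_id, hS₂.conv_eq, algHom_comp_convOne] using
      algHom_comp_conv (Δ := Δ) L LinearMap.id (S Z Y)
  refine conv_left_inv_eq_right_inv hΔ hl hr (D := (Δ Y X Z).toLinearMap) ?_ ?_
  · simpa only [LinearMap.comp_id, hS₁.conv_eq, algHom_comp_convOne] using
      algHom_comp_conv (Δ := Δ) (Δ Y X Z) (S X Y) LinearMap.id
  · rw [hD, hG, ← conv_assoc hΔ, conv_assoc hΔ L.toLinearMap, hR, conv_convOne hr, hL]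

end Antipode

end Cogroupoid

/-- in a cogroupoid `C`, for objects `X, Y`, the map
`S_{Y,X} ∘ S_{X,Y} : C(X,Y) → C(X,Y)` is left semi-`C(X,X)`-colinear with respect
to `S_{X,X}²`, i.e. `Δ_{X,Y}^X (S_{Y,X}(S_{X,Y}(a))) = (S_{X,X}² ⊗ S_{Y,X}S_{X,Y})(Δ_{X,Y}^X(a))`.

The cogroupoid is encoded by its objects `ι`, algebras `Cg U V`, comultiplications
`Δ U V W : Cg U V → Cg U W ⊗ Cg W V`, counits `εm U : Cg U U → k`, and antipodes
`S U V : Cg U V → Cg V U`, subject to the coassociativity, counit and antipode axioms. -/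
theorem cogroupoid_double_antipode_semicolinear
    {k : Type*} [Field k] {ι : Type*} (Cg : ι → ι → Type*)
    [∀ U V, Ring (Cg U V)] [∀ U V, Algebra k (Cg U V)]
    (Δ : ∀ U V W, Cg U V →ₐ[k] Cg U W ⊗[k] Cg W V)
    (εm : ∀ U, Cg U U →ₐ[k] k)
    (S : ∀ U V, Cg U V →ₗ[k] Cg V U)
    -- coassociativity
    (hcoassoc : ∀ (U V W T : ι) (a : Cg U V),
      (TensorProduct.map (Δ U W T).toLinearMap (LinearMap.id : Cg W V →ₗ[k] Cg W V))
          (Δ U V W a) =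
        (TensorProduct.assoc k (Cg U T) (Cg T W) (Cg W V)).symm
          ((TensorProduct.map (LinearMap.id : Cg U T →ₗ[k] Cg U T) (Δ T V W).toLinearMap)
            (Δ U V T a)))
    -- left counit axiom
    (hcounitl : ∀ (U V : ι) (a : Cg U V),
      (TensorProduct.lid k (Cg U V))
        ((TensorProduct.map (εm U).toLinearMap (LinearMap.id : Cg U V →ₗ[k] Cg U V))
          (Δ U V U a)) = a)
    -- right counit axiom
    (hcounitr : ∀ (U V : ι) (a : Cg U V),
      (TensorProduct.rid k (Cg U V))
        ((TensorProduct.map (LinearMap.id : Cg U V →ₗ[k] Cg U V) (εm V).toLinearMap)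
          (Δ U V V a)) = a)
    -- antipode axioms
    (hS₁ : ∀ (U V : ι) (a : Cg U U),
      (LinearMap.mul' k (Cg V U))
        ((TensorProduct.map (S U V) (LinearMap.id : Cg V U →ₗ[k] Cg V U)) (Δ U U V a)) =
        εm U a • (1 : Cg V U))
    (hS₂ : ∀ (U V : ι) (a : Cg U U),
      (LinearMap.mul' k (Cg U V))
        ((TensorProduct.map (LinearMap.id : Cg U V →ₗ[k] Cg U V) (S V U)) (Δ U U V a)) =
        εm U a • (1 : Cg U V))
    (X Y : ι) :
    ∀ a : Cg X Y,
      Δ X Y X ((S Y X) ((S X Y) a)) =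
        (TensorProduct.map ((S X X) ∘ₗ (S X X)) ((S Y X) ∘ₗ (S X Y))) (Δ X Y X a) := by
  intro a
  have hΔS (U V W : ι) (b : Cg U V) :
      Δ V U W (S U V b) = map (S W V) (S U W) (TensorProduct.comm k _ _ (Δ U V W b)) :=
    LinearMap.congr_fun (Cogroupoid.comul_comp_antipode hcoassoc hcounitl hcounitr hS₁ hS₂ U V W) b
  rw [hΔS, hΔS, ← map_comm, comm_comm, map_map]
end

section
/- Let C be a cogroupoid with objects X, Y, set A = C(X,X), R = C(X,Y), and let ψ : R → k be linear. If ψ is a twisted trace with respect to an algebra automorphism σ of R (ψ(xy) = ψ(yσ(x))), then the algebra automorphism θ := σ⁻¹ ∘ S_{Y,X} ∘ S_{X,Y} satisfies ψ(θ(a^{[1]}) x a^{[2]}) = ε(a)ψ(x) for all a ∈ A, x ∈ R, where a^{[1]} ⊗ a^{[2]} = a_{(1)}^{XY} ⊗ S_{Y,X}(a_{(2)}^{YX}). -/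
/-!
Moving `θ(a⁽¹⁾) = σ⁻¹ S² (a₍₁₎)` around the twisted trace turns it into `S² (a₍₁₎)` at the right
end, so the left-hand side becomes `ψ (x · S(a₍₂₎) S(S(a₍₁₎))) = ψ (x · S(S(a₍₁₎) a₍₂₎))`, and the
antipode axiom collapses `S(a₍₁₎) a₍₂₎` to `ε(a) 1`. The one ingredient beyond the axioms is that
the antipode reverses products, which is proved as for Hopf algebras.
-/

open TensorProduct

namespace Cogroupoid

variable {k : Type*} [CommSemiring k] {ι : Type*} {Cg : ι → ι → Type*}
  [∀ U V, Semiring (Cg U V)] [∀ U V, Algebra k (Cg U V)]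

def IsCoassociative (Δ : ∀ U V W, Cg U V →ₐ[k] Cg U W ⊗[k] Cg W V) : Prop :=
  ∀ (U V W T : ι) (a : Cg U V),
    map (Δ U W T).toLinearMap LinearMap.id (Δ U V W a) =
      (TensorProduct.assoc k (Cg U T) (Cg T W) (Cg W V)).symm
        (map LinearMap.id (Δ T V W).toLinearMap (Δ U V T a))

def IsLeftCounit (Δ : ∀ U V W, Cg U V →ₐ[k] Cg U W ⊗[k] Cg W V) (εm : ∀ U, Cg U U →ₐ[k] k) :
    Prop :=
  ∀ (U V : ι) (a : Cg U V),
    TensorProduct.lid k (Cg U V) (map (εm U).toLinearMap LinearMap.id (Δ U V U a)) = a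

def IsRightCounit (Δ : ∀ U V W, Cg U V →ₐ[k] Cg U W ⊗[k] Cg W V) (εm : ∀ U, Cg U U →ₐ[k] k) :
    Prop :=
  ∀ (U V : ι) (a : Cg U V),
    TensorProduct.rid k (Cg U V) (map LinearMap.id (εm V).toLinearMap (Δ U V V a)) = a

def IsLeftAntipode (Δ : ∀ U V W, Cg U V →ₐ[k] Cg U W ⊗[k] Cg W V) (εm : ∀ U, Cg U U →ₐ[k] k)
    (S : ∀ U V, Cg U V →ₗ[k] Cg V U) : Prop :=
  ∀ (U V : ι) (a : Cg U U), LinearMap.mul' k (Cg V U) (map (S U V) LinearMap.id (Δ U U V a)) =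
    εm U a • (1 : Cg V U)

def IsRightAntipode (Δ : ∀ U V W, Cg U V →ₐ[k] Cg U W ⊗[k] Cg W V) (εm : ∀ U, Cg U U →ₐ[k] k)
    (S : ∀ U V, Cg U V →ₗ[k] Cg V U) : Prop :=
  ∀ (U V : ι) (a : Cg U U), LinearMap.mul' k (Cg U V) (map LinearMap.id (S V U) (Δ U U V a)) =
    εm U a • (1 : Cg U V)

variable {Δ : ∀ U V W, Cg U V →ₐ[k] Cg U W ⊗[k] Cg W V} {εm : ∀ U, Cg U U →ₐ[k] k}
  {S : ∀ U V, Cg U V →ₗ[k] Cg V U}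

theorem IsLeftAntipode.map_one (hS : IsLeftAntipode Δ εm S) (P Q : ι) : S P Q 1 = 1 := by
  simpa [Algebra.TensorProduct.one_def] using hS P Q 1

section Sandwich

variable (S) (P Q : ι)

def antipodeSandwich :
    ((Cg P Q ⊗[k] Cg Q P) ⊗[k] Cg P Q) ⊗[k] ((Cg P Q ⊗[k] Cg Q P) ⊗[k] Cg P Q) →ₗ[k] Cg Q P :=
  LinearMap.mul' k (Cg Q P) ∘ₗ
    map (LinearMap.mul' k (Cg Q P) ∘ₗ map (S P Q) LinearMap.id ∘ₗ LinearMap.mul' k _)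
      (LinearMap.mul' k (Cg Q P) ∘ₗ map (S P Q) (S P Q) ∘ₗ
        (TensorProduct.comm k _ _).toLinearMap) ∘ₗ
    (tensorTensorTensorComm k _ _ _ _).toLinearMap

@[simp]
theorem antipodeSandwich_tmul (β γ : Cg P Q ⊗[k] Cg Q P) (p q : Cg P Q) :
    antipodeSandwich S P Q ((β ⊗ₜ p) ⊗ₜ (γ ⊗ₜ q)) =
      LinearMap.mul' k (Cg Q P) (map (S P Q) LinearMap.id (β * γ)) * (S P Q q * S P Q p) := by
  simp [antipodeSandwich]

variable {S P Q}

theorem antipodeSandwich_comp_comul_left (hS : IsLeftAntipode Δ εm S) :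
    antipodeSandwich S P Q ∘ₗ
        map (map (Δ P P Q).toLinearMap LinearMap.id) (map (Δ P P Q).toLinearMap LinearMap.id) =
      LinearMap.mul' k (Cg Q P) ∘ₗ map (S P Q) (S P Q) ∘ₗ
        (TensorProduct.comm k _ _).toLinearMap ∘ₗ
        map (TensorProduct.lid k (Cg P Q) ∘ₗ map (εm P).toLinearMap LinearMap.id)
          (TensorProduct.lid k (Cg P Q) ∘ₗ map (εm P).toLinearMap LinearMap.id) := by
  ext b p c q
  simp [← map_mul, hS P Q, smul_smul, mul_comm]

theorem antipodeSandwich_tmul_assoc_symm (p q : Cg P Q) (r : Cg Q P) (x : Cg P Q)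
    (β : Cg Q P ⊗[k] Cg P Q) :
    antipodeSandwich S P Q
        (((p ⊗ₜ r) ⊗ₜ x) ⊗ₜ (TensorProduct.assoc k _ _ _).symm (q ⊗ₜ β)) =
      S P Q (p * q) * (r * LinearMap.mul' k (Cg Q P) (map LinearMap.id (S P Q) β) * S P Q x) := by
  induction β using TensorProduct.induction_on with
  | zero => simp
  | add β₁ β₂ h₁ h₂ => simp only [tmul_add, map_add, h₁, h₂, mul_add, add_mul]
  | tmul r' y => simp [mul_assoc]

theorem antipodeSandwich_comp_comul_right (hS : IsRightAntipode Δ εm S) :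
    antipodeSandwich S P Q ∘ₗ
        map
          ((TensorProduct.assoc k _ _ _).symm.toLinearMap ∘ₗ
            map LinearMap.id (Δ Q Q P).toLinearMap)
          ((TensorProduct.assoc k _ _ _).symm.toLinearMap ∘ₗ
            map LinearMap.id (Δ Q Q P).toLinearMap) =
      S P Q ∘ₗ LinearMap.mul' k (Cg P Q) ∘ₗ
        map (TensorProduct.rid k (Cg P Q) ∘ₗ map LinearMap.id (εm Q).toLinearMap)
          (TensorProduct.rid k (Cg P Q) ∘ₗ map LinearMap.id (εm Q).toLinearMap) := by
  ext p a q a'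
  have h : ∀ α : Cg Q P ⊗[k] Cg P Q,
      antipodeSandwich S P Q ((TensorProduct.assoc k _ _ _).symm (p ⊗ₜ α) ⊗ₜ
          (TensorProduct.assoc k _ _ _).symm (q ⊗ₜ Δ Q Q P a')) =
        εm Q a' • (S P Q (p * q) * LinearMap.mul' k (Cg Q P) (map LinearMap.id (S P Q) α)) := by
    intro α
    induction α using TensorProduct.induction_on with
    | zero => simp
    | add α₁ α₂ h₁ h₂ =>
      simp only [tmul_add, map_add, add_tmul, h₁, h₂, mul_add, smul_add]
    | tmul r x => simp [antipodeSandwich_tmul_assoc_symm, hS Q P]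
  simp [h, hS Q P]

end Sandwich

/- Both sides equal `antipodeSandwich`, i.e. `S(u₁v₁) u₂v₂ S(v₃) S(u₃)`, at the triple coproducts
of `u` and `v`: the left antipode axiom collapses `(u₁ ⊗ u₂)(v₁ ⊗ v₂)` and leaves `S(v) S(u)`,
while the right one collapses `v₂ ⊗ v₃` and then `u₂ ⊗ u₃` and leaves `S(uv)`. -/
theorem antipode_mul_antidistrib (hΔ : IsCoassociative Δ) (hl : IsLeftCounit Δ εm)
    (hr : IsRightCounit Δ εm) (hSl : IsLeftAntipode Δ εm S) (hSr : IsRightAntipode Δ εm S)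
    {P Q : ι} (u v : Cg P Q) : S P Q (u * v) = S P Q v * S P Q u := by
  have hleft :=
    congr($(antipodeSandwich_comp_comul_left (Q := Q) hSl) (Δ P Q P u ⊗ₜ Δ P Q P v))
  have hright :=
    congr($(antipodeSandwich_comp_comul_right (P := P) hSr) (Δ P Q Q u ⊗ₜ Δ P Q Q v))
  simp only [LinearMap.comp_apply, map_tmul, LinearEquiv.coe_coe, TensorProduct.comm_tmul,
    LinearMap.mul'_apply] at hleft hright
  rw [← hΔ, ← hΔ, hr, hr] at hright
  rw [hl, hl] at hleft
  rw [← hright, hleft]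

end Cogroupoid

section TwistedTrace

variable {k R R' : Type*} [CommSemiring k] [Semiring R] [Semiring R'] [Algebra k R] [Algebra k R']

def IsTwistedTrace (ψ : R →ₗ[k] k) (σ : R ≃ₐ[k] R) : Prop :=
  ∀ x y : R, ψ (x * y) = ψ (y * σ x)

theorem IsTwistedTrace.apply_mul'_map {ψ : R →ₗ[k] k} {σ : R ≃ₐ[k] R}
    (hψ : IsTwistedTrace ψ σ)
    {S : R →ₗ[k] R'} {S' : R' →ₗ[k] R} (hS' : ∀ u v, S' (u * v) = S' v * S' u)
    (x : R) (t : R ⊗[k] R') :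
    ψ (LinearMap.mul' k R (map (LinearMap.mulRight k x) LinearMap.id
        (map (σ.symm.toLinearMap ∘ₗ S' ∘ₗ S) S' t))) =
      ψ (x * S' (LinearMap.mul' k R' (map S LinearMap.id t))) := by
  induction t using TensorProduct.induction_on with
  | zero => simp
  | add t₁ t₂ h₁ h₂ => simp only [map_add, mul_add, h₁, h₂]
  | tmul r r' =>
    simp only [map_tmul, LinearMap.mul'_apply, LinearMap.mulRight_apply, LinearMap.id_coe, id_eq,
      LinearMap.comp_apply, AlgEquiv.toLinearMap_apply]
    rw [mul_assoc, hψ, AlgEquiv.apply_symm_apply, hS', mul_assoc]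

end TwistedTrace

/-- in a cogroupoid `C` with `A = C(X,X)`, `R = C(X,Y)`, if
`ψ : R → k` is a twisted trace with respect to an algebra automorphism `σ` of `R`,
then `θ := σ⁻¹ ∘ S_{Y,X} ∘ S_{X,Y}` satisfies `ψ(θ(a⁽¹⁾) x a⁽²⁾) = ε(a) ψ(x)`
for all `a ∈ A`, `x ∈ R`, where `a⁽¹⁾ ⊗ a⁽²⁾ = a₍₁₎^{XY} ⊗ S_{Y,X}(a₍₂₎^{YX})`. -/
theorem cogroupoid_twisted_trace_to_MU
    {k : Type*} [Field k] {ι : Type*} (Cg : ι → ι → Type*)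
    [∀ U V, Ring (Cg U V)] [∀ U V, Algebra k (Cg U V)]
    (Δ : ∀ U V W, Cg U V →ₐ[k] Cg U W ⊗[k] Cg W V)
    (εm : ∀ U, Cg U U →ₐ[k] k)
    (S : ∀ U V, Cg U V →ₗ[k] Cg V U)
    -- coassociativity
    (hcoassoc : ∀ (U V W T : ι) (a : Cg U V),
      (TensorProduct.map (Δ U W T).toLinearMap (LinearMap.id : Cg W V →ₗ[k] Cg W V))
          (Δ U V W a) =
        (TensorProduct.assoc k (Cg U T) (Cg T W) (Cg W V)).symm
          ((TensorProduct.map (LinearMap.id : Cg U T →ₗ[k] Cg U T) (Δ T V W).toLinearMap)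
            (Δ U V T a)))
    -- left counit axiom
    (hcounitl : ∀ (U V : ι) (a : Cg U V),
      (TensorProduct.lid k (Cg U V))
        ((TensorProduct.map (εm U).toLinearMap (LinearMap.id : Cg U V →ₗ[k] Cg U V))
          (Δ U V U a)) = a)
    -- right counit axiom
    (hcounitr : ∀ (U V : ι) (a : Cg U V),
      (TensorProduct.rid k (Cg U V))
        ((TensorProduct.map (LinearMap.id : Cg U V →ₗ[k] Cg U V) (εm V).toLinearMap)
          (Δ U V V a)) = a)
    -- antipode axioms
    (hS₁ : ∀ (U V : ι) (a : Cg U U),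
      (LinearMap.mul' k (Cg V U))
        ((TensorProduct.map (S U V) (LinearMap.id : Cg V U →ₗ[k] Cg V U)) (Δ U U V a)) =
        εm U a • (1 : Cg V U))
    (hS₂ : ∀ (U V : ι) (a : Cg U U),
      (LinearMap.mul' k (Cg U V))
        ((TensorProduct.map (LinearMap.id : Cg U V →ₗ[k] Cg U V) (S V U)) (Δ U U V a)) =
        εm U a • (1 : Cg U V))
    (X Y : ι)
    (ψ : Cg X Y →ₗ[k] k) (σ : Cg X Y ≃ₐ[k] Cg X Y)
    (htrace : ∀ x y : Cg X Y, ψ (x * y) = ψ (y * σ x)) :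
    let θL : Cg X Y →ₗ[k] Cg X Y :=
      σ.symm.toLinearMap ∘ₗ (S Y X) ∘ₗ (S X Y)
    ∀ (a : Cg X X) (x : Cg X Y),
      ψ ((LinearMap.mul' k (Cg X Y))
        ((TensorProduct.map (LinearMap.mulRight k x) (LinearMap.id : Cg X Y →ₗ[k] Cg X Y))
          ((TensorProduct.map θL (S Y X)) (Δ X X Y a)))) = εm X a * ψ x := by
  intro θL a x
  rw [IsTwistedTrace.apply_mul'_map htrace
      (Cogroupoid.antipode_mul_antidistrib hcoassoc hcounitl hcounitr hS₁ hS₂) x,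
    hS₁ X Y a, map_smul, Cogroupoid.IsLeftAntipode.map_one hS₁, mul_smul_comm, mul_one, map_smul,
    smul_eq_mul]
end

section
/- Let C be a cogroupoid with objects X, Y, set A = C(X,X), R = C(X,Y), and let ψ : R → k be linear. If there exists an algebra automorphism θ of R such that ψ(θ(a^{[1]}) x a^{[2]}) = ε(a)ψ(x) for all a ∈ A and x ∈ R (where a^{[1]} ⊗ a^{[2]} = a_{(1)}^{XY} ⊗ S_{Y,X}(a_{(2)}^{YX})), then ψ is a twisted trace with respect to σ := S_{Y,X} ∘ S_{X,Y} ∘ θ⁻¹, i.e. ψ(xy) = ψ(yσ(x)) for all x, y ∈ R. -/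
/-! Write `u = θ⁻¹ x` and `u₁ ⊗ u₂ ⊗ u₃ ∈ C(X,Y) ⊗ C(Y,X) ⊗ C(X,Y)` for its iterated coproduct.
Expanding `u` through the counit of `C(X,X)`, the invariance of `ψ` and coassociativity give
`ψ(y S S u) = ψ(θ(u₁) y S S(u₃) S(u₂))`. As `S` is antimultiplicative,
`S S(u₃) S(u₂) = S(u₂ S(u₃)) = ε(u₂)`, and the sum collapses to `ψ(θ(u) y) = ψ(x y)`.
Antimultiplicativity of each `S_{U,V}` is the Hopf-algebra argument, run across the components
of the cogroupoid. -/

open TensorProduct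

section

variable {k : Type*} [CommSemiring k] {ι : Type*} {Cg : ι → ι → Type*}
  [∀ U V, Semiring (Cg U V)] [∀ U V, Algebra k (Cg U V)]

structure IsCogroupoid (Δ : ∀ U V W, Cg U V →ₐ[k] Cg U W ⊗[k] Cg W V)
    (εm : ∀ U, Cg U U →ₐ[k] k) (S : ∀ U V, Cg U V →ₗ[k] Cg V U) : Prop where
  coassoc : ∀ (U V W T : ι) (a : Cg U V),
    map (Δ U W T).toLinearMap LinearMap.id (Δ U V W a) =
      (TensorProduct.assoc k (Cg U T) (Cg T W) (Cg W V)).symm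
        (map LinearMap.id (Δ T V W).toLinearMap (Δ U V T a))
  counit_left : ∀ (U V : ι) (a : Cg U V),
    TensorProduct.lid k (Cg U V) (map (εm U).toLinearMap LinearMap.id (Δ U V U a)) = a
  counit_right : ∀ (U V : ι) (a : Cg U V),
    TensorProduct.rid k (Cg U V) (map LinearMap.id (εm V).toLinearMap (Δ U V V a)) = a
  antipode_left : ∀ (U V : ι) (a : Cg U U),
    LinearMap.mul' k (Cg V U) (map (S U V) LinearMap.id (Δ U U V a)) = εm U a • 1
  antipode_right : ∀ (U V : ι) (a : Cg U U),
    LinearMap.mul' k (Cg U V) (map LinearMap.id (S V U) (Δ U U V a)) = εm U a • 1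

namespace IsCogroupoid

variable {Δ : ∀ U V W, Cg U V →ₐ[k] Cg U W ⊗[k] Cg W V} {εm : ∀ U, Cg U U →ₐ[k] k}
  {S : ∀ U V, Cg U V →ₗ[k] Cg V U}

theorem sum_counit_smul_left (hC : IsCogroupoid Δ εm S) {U V : ι} {a : Cg U V}
    {s : Finset (Cg U U × Cg U V)} (hs : Δ U V U a = ∑ p ∈ s, p.1 ⊗ₜ p.2) :
    ∑ p ∈ s, εm U p.1 • p.2 = a := by
  simpa [hs, map_sum] using hC.counit_left U V a

theorem sum_counit_smul_right (hC : IsCogroupoid Δ εm S) {U V : ι} {a : Cg U V}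
    {s : Finset (Cg U V × Cg V V)} (hs : Δ U V V a = ∑ p ∈ s, p.1 ⊗ₜ p.2) :
    ∑ p ∈ s, εm V p.2 • p.1 = a := by
  simpa [hs, map_sum] using hC.counit_right U V a

theorem sum_antipode_mul (hC : IsCogroupoid Δ εm S) {U V : ι} {a : Cg U U}
    {s : Finset (Cg U V × Cg V U)} (hs : Δ U U V a = ∑ p ∈ s, p.1 ⊗ₜ p.2) :
    ∑ p ∈ s, S U V p.1 * p.2 = εm U a • 1 := by
  simpa [hs, map_sum] using hC.antipode_left U V a

theorem sum_mul_antipode (hC : IsCogroupoid Δ εm S) {U V : ι} {a : Cg U U}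
    {s : Finset (Cg U V × Cg V U)} (hs : Δ U U V a = ∑ p ∈ s, p.1 ⊗ₜ p.2) :
    ∑ p ∈ s, p.1 * S V U p.2 = εm U a • 1 := by
  simpa [hs, map_sum] using hC.antipode_right U V a

theorem antipode_one (hC : IsCogroupoid Δ εm S) (U V : ι) : S U V 1 = 1 := by
  simpa [Algebra.TensorProduct.one_def] using hC.antipode_left U V 1

theorem sum_sum_coassoc (hC : IsCogroupoid Δ εm S) {U V W T : ι} {M : Type*}
    [AddCommMonoid M] [Module k M] (L : (Cg U T ⊗[k] Cg T W) ⊗[k] Cg W V →ₗ[k] M) {a : Cg U V}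
    {s : Finset (Cg U W × Cg W V)} (hs : Δ U V W a = ∑ p ∈ s, p.1 ⊗ₜ p.2)
    {t : Cg U W × Cg W V → Finset (Cg U T × Cg T W)}
    (ht : ∀ p, Δ U W T p.1 = ∑ q ∈ t p, q.1 ⊗ₜ q.2)
    {s' : Finset (Cg U T × Cg T V)} (hs' : Δ U V T a = ∑ r ∈ s', r.1 ⊗ₜ r.2)
    {t' : Cg U T × Cg T V → Finset (Cg T W × Cg W V)}
    (ht' : ∀ r, Δ T V W r.2 = ∑ w ∈ t' r, w.1 ⊗ₜ w.2) :
    ∑ p ∈ s, ∑ q ∈ t p, L ((q.1 ⊗ₜ q.2) ⊗ₜ p.2) =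
      ∑ r ∈ s', ∑ w ∈ t' r, L ((r.1 ⊗ₜ w.1) ⊗ₜ w.2) := by
  simpa [hs, hs', ht, ht', map_sum, sum_tmul, tmul_sum] using congrArg L (hC.coassoc U V W T a)

theorem sum_sum_antipode_mul_mul (hC : IsCogroupoid Δ εm S) {U V : ι} {u : Cg U V}
    {s : Finset (Cg U V × Cg V V)} (hs : Δ U V V u = ∑ p ∈ s, p.1 ⊗ₜ p.2)
    {t : Cg U V × Cg V V → Finset (Cg V U × Cg U V)}
    (ht : ∀ p, Δ V V U p.2 = ∑ q ∈ t p, q.1 ⊗ₜ q.2) (f : Cg U V →ₗ[k] Cg V U) :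
    ∑ p ∈ s, ∑ q ∈ t p, S U V p.1 * q.1 * f q.2 = f u := by
  obtain ⟨s', hs'⟩ := exists_finset (Δ U V U u)
  choose t' ht' using fun r : Cg U U × Cg U V => exists_finset (Δ U U V r.1)
  have h := hC.sum_sum_coassoc
    (LinearMap.mul' k _ ∘ₗ map (LinearMap.mul' k _ ∘ₗ map (S U V) LinearMap.id) f) hs' ht' hs ht
  simp only [LinearMap.comp_apply, map_tmul, LinearMap.id_apply, LinearMap.mul'_apply] at h
  rw [← h, ← hC.sum_counit_smul_left hs', map_sum]
  refine Finset.sum_congr rfl fun r _ => ?_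
  rw [← Finset.sum_mul, hC.sum_antipode_mul (ht' r), map_smul, smul_one_mul]

theorem sum_sum_mul_mul_antipode_mul (hC : IsCogroupoid Δ εm S) {U V : ι} {x y : Cg V V}
    {s : Finset (Cg V U × Cg U V)} (hs : Δ V V U x = ∑ q ∈ s, q.1 ⊗ₜ q.2)
    {t : Finset (Cg V U × Cg U V)} (ht : Δ V V U y = ∑ q ∈ t, q.1 ⊗ₜ q.2) :
    ∑ q ∈ s, ∑ Q ∈ t, q.1 * Q.1 * S U V (q.2 * Q.2) = (εm V x * εm V y) • 1 := by
  have h := hC.antipode_right V U (x * y)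
  rw [map_mul, hs, ht, Finset.sum_mul_sum] at h
  simpa [map_sum, Algebra.TensorProduct.tmul_mul_tmul] using h

theorem antipode_mul_antidistrib (hC : IsCogroupoid Δ εm S) {U V : ι} (a b : Cg U V) :
    S U V (a * b) = S U V b * S U V a := by
  obtain ⟨sa, hsa⟩ := exists_finset (Δ U V V a)
  obtain ⟨sb, hsb⟩ := exists_finset (Δ U V V b)
  choose t ht using fun p : Cg U V × Cg V V => exists_finset (Δ V V U p.2)
  symm
  calc S U V b * S U V a
      = ∑ P ∈ sb, ∑ p ∈ sa, S U V P.1 * S U V p.1 * ((εm V p.2 * εm V P.2) • 1) := by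
        conv_lhs => rw [← hC.sum_counit_smul_right hsa, ← hC.sum_counit_smul_right hsb]
        simp only [map_sum, map_smul, Finset.sum_mul_sum, mul_smul_comm, smul_mul_assoc, mul_one,
          smul_smul]
    _ = ∑ P ∈ sb, ∑ Q ∈ t P, S U V P.1 *
          ∑ p ∈ sa, ∑ q ∈ t p, S U V p.1 * q.1 * (Q.1 * S U V (q.2 * Q.2)) := by
        simp only [← hC.sum_sum_mul_mul_antipode_mul (ht _) (ht _), Finset.mul_sum, mul_assoc]
        exact Finset.sum_congr rfl fun P _ =>
          (Finset.sum_congr rfl fun p _ => Finset.sum_comm).trans Finset.sum_comm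
    _ = ∑ P ∈ sb, ∑ Q ∈ t P, S U V P.1 * Q.1 * (S U V ∘ₗ LinearMap.mulLeft k a) Q.2 := by
        refine Finset.sum_congr rfl fun P _ => Finset.sum_congr rfl fun Q _ => ?_
        have := hC.sum_sum_antipode_mul_mul hsa ht
          (LinearMap.mulLeft k Q.1 ∘ₗ S U V ∘ₗ LinearMap.mulRight k Q.2)
        simp only [LinearMap.comp_apply, LinearMap.mulLeft_apply, LinearMap.mulRight_apply]
          at this ⊢
        rw [this, mul_assoc]
    _ = S U V (a * b) := hC.sum_sum_antipode_mul_mul hsb ht _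

end IsCogroupoid

/-- `ψ(θ(a⁽¹⁾) x S(a⁽²⁾)) = ε(a) ψ(x)`: `ψ` is invariant under the `θ`-twisted adjoint action. -/
def IsTwistedAdInvariant (Δ : ∀ U V W, Cg U V →ₐ[k] Cg U W ⊗[k] Cg W V)
    (εm : ∀ U, Cg U U →ₐ[k] k) (S : ∀ U V, Cg U V →ₗ[k] Cg V U) {X Y : ι}
    (ψ : Cg X Y →ₗ[k] k) (θ : Cg X Y ≃ₐ[k] Cg X Y) : Prop :=
  ∀ (a : Cg X X) (x : Cg X Y),
    ψ (LinearMap.mul' k (Cg X Y) (map (LinearMap.mulRight k x) LinearMap.id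
      (map θ.toLinearMap (S Y X) (Δ X X Y a)))) = εm X a * ψ x

namespace IsTwistedAdInvariant

variable {Δ : ∀ U V W, Cg U V →ₐ[k] Cg U W ⊗[k] Cg W V} {εm : ∀ U, Cg U U →ₐ[k] k}
  {S : ∀ U V, Cg U V →ₗ[k] Cg V U} {X Y : ι} {ψ : Cg X Y →ₗ[k] k} {θ : Cg X Y ≃ₐ[k] Cg X Y}

theorem sum_eq_counit_mul (hψ : IsTwistedAdInvariant Δ εm S ψ θ) {a : Cg X X}
    {t : Finset (Cg X Y × Cg Y X)} (ht : Δ X X Y a = ∑ w ∈ t, w.1 ⊗ₜ w.2) (x : Cg X Y) :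
    ∑ w ∈ t, ψ (θ w.1 * x * S Y X w.2) = εm X a * ψ x := by
  simpa [ht, map_sum] using hψ a x

theorem apply_eq_sum_sum (hψ : IsTwistedAdInvariant Δ εm S ψ θ) (hC : IsCogroupoid Δ εm S)
    (g : Cg X Y →ₗ[k] Cg X Y) {u : Cg X Y}
    {s : Finset (Cg X Y × Cg Y Y)} (hs : Δ X Y Y u = ∑ p ∈ s, p.1 ⊗ₜ p.2)
    {t : Cg X Y × Cg Y Y → Finset (Cg Y X × Cg X Y)}
    (ht : ∀ p, Δ Y Y X p.2 = ∑ q ∈ t p, q.1 ⊗ₜ q.2) :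
    ψ (g u) = ∑ p ∈ s, ∑ q ∈ t p, ψ (θ p.1 * g q.2 * S Y X q.1) := by
  obtain ⟨s', hs'⟩ := exists_finset (Δ X Y X u)
  choose t' ht' using fun r : Cg X X × Cg X Y => exists_finset (Δ X X Y r.1)
  have h := hC.sum_sum_coassoc (ψ ∘ₗ LinearMap.mul' k _ ∘ₗ
      map (LinearMap.mul' k _ ∘ₗ map θ.toLinearMap g) (S Y X) ∘ₗ (rightComm k _ _ _).toLinearMap)
    hs' ht' hs ht
  simp only [LinearMap.comp_apply, LinearEquiv.coe_coe, rightComm_tmul, map_tmul,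
    LinearMap.mul'_apply, AlgEquiv.toLinearMap_apply] at h
  rw [← h, ← hC.sum_counit_smul_left hs', map_sum, map_sum]
  refine Finset.sum_congr rfl fun r _ => ?_
  rw [map_smul, map_smul, hψ.sum_eq_counit_mul (ht' r), smul_eq_mul]

end IsTwistedAdInvariant

end

/-- in a cogroupoid `C` with `A = C(X,X)`, `R = C(X,Y)`, if an
algebra automorphism `θ` of `R` satisfies `ψ(θ(a⁽¹⁾) x a⁽²⁾) = ε(a) ψ(x)` for all
`a ∈ A`, `x ∈ R` (with `a⁽¹⁾ ⊗ a⁽²⁾ = a₍₁₎^{XY} ⊗ S_{Y,X}(a₍₂₎^{YX})`), then `ψ`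
is a twisted trace with respect to `σ := S_{Y,X} ∘ S_{X,Y} ∘ θ⁻¹`. -/
theorem cogroupoid_MU_to_twisted_trace
    {k : Type*} [Field k] {ι : Type*} (Cg : ι → ι → Type*)
    [∀ U V, Ring (Cg U V)] [∀ U V, Algebra k (Cg U V)]
    (Δ : ∀ U V W, Cg U V →ₐ[k] Cg U W ⊗[k] Cg W V)
    (εm : ∀ U, Cg U U →ₐ[k] k)
    (S : ∀ U V, Cg U V →ₗ[k] Cg V U)
    -- coassociativity
    (hcoassoc : ∀ (U V W T : ι) (a : Cg U V),
      (TensorProduct.map (Δ U W T).toLinearMap (LinearMap.id : Cg W V →ₗ[k] Cg W V))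
          (Δ U V W a) =
        (TensorProduct.assoc k (Cg U T) (Cg T W) (Cg W V)).symm
          ((TensorProduct.map (LinearMap.id : Cg U T →ₗ[k] Cg U T) (Δ T V W).toLinearMap)
            (Δ U V T a)))
    -- left counit axiom
    (hcounitl : ∀ (U V : ι) (a : Cg U V),
      (TensorProduct.lid k (Cg U V))
        ((TensorProduct.map (εm U).toLinearMap (LinearMap.id : Cg U V →ₗ[k] Cg U V))
          (Δ U V U a)) = a)
    -- right counit axiom
    (hcounitr : ∀ (U V : ι) (a : Cg U V),
      (TensorProduct.rid k (Cg U V))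
        ((TensorProduct.map (LinearMap.id : Cg U V →ₗ[k] Cg U V) (εm V).toLinearMap)
          (Δ U V V a)) = a)
    -- antipode axioms
    (hS₁ : ∀ (U V : ι) (a : Cg U U),
      (LinearMap.mul' k (Cg V U))
        ((TensorProduct.map (S U V) (LinearMap.id : Cg V U →ₗ[k] Cg V U)) (Δ U U V a)) =
        εm U a • (1 : Cg V U))
    (hS₂ : ∀ (U V : ι) (a : Cg U U),
      (LinearMap.mul' k (Cg U V))
        ((TensorProduct.map (LinearMap.id : Cg U V →ₗ[k] Cg U V) (S V U)) (Δ U U V a)) =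
        εm U a • (1 : Cg U V))
    (X Y : ι)
    (ψ : Cg X Y →ₗ[k] k) (θ : Cg X Y ≃ₐ[k] Cg X Y)
    (hMU : ∀ (a : Cg X X) (x : Cg X Y),
      ψ ((LinearMap.mul' k (Cg X Y))
        ((TensorProduct.map (LinearMap.mulRight k x) (LinearMap.id : Cg X Y →ₗ[k] Cg X Y))
          ((TensorProduct.map (θ.toLinearMap : Cg X Y →ₗ[k] Cg X Y) (S Y X))
            (Δ X X Y a)))) = εm X a * ψ x) :
    ∀ x y : Cg X Y, ψ (x * y) = ψ (y * (S Y X) ((S X Y) (θ.symm x))) := by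
  have hC : IsCogroupoid Δ εm S := ⟨hcoassoc, hcounitl, hcounitr, hS₁, hS₂⟩
  have hψ : IsTwistedAdInvariant Δ εm S ψ θ := hMU
  intro x y
  obtain ⟨u, rfl⟩ := θ.surjective x
  obtain ⟨s, hs⟩ := exists_finset (Δ X Y Y u)
  choose t ht using fun p : Cg X Y × Cg Y Y => exists_finset (Δ Y Y X p.2)
  rw [θ.symm_apply_apply]
  calc ψ (θ u * y) = ∑ p ∈ s, εm Y p.2 • ψ (θ p.1 * y) := by
        conv_lhs => rw [← hC.sum_counit_smul_right hs]
        simp only [map_sum, map_smul, Finset.sum_mul, smul_mul_assoc]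
    _ = ∑ p ∈ s, ∑ q ∈ t p, ψ (θ p.1 * y * S Y X (q.1 * S X Y q.2)) := by
        refine Finset.sum_congr rfl fun p _ => ?_
        rw [← map_sum, ← Finset.mul_sum, ← map_sum, hC.sum_mul_antipode (ht p), map_smul,
          hC.antipode_one, mul_smul_comm, mul_one, map_smul]
    _ = ∑ p ∈ s, ∑ q ∈ t p, ψ (θ p.1 * (y * S Y X (S X Y q.2)) * S Y X q.1) := by
        simp only [hC.antipode_mul_antidistrib, mul_assoc]
    _ = ψ (y * S Y X (S X Y u)) :=
        (hψ.apply_eq_sum_sum hC (LinearMap.mulLeft k y ∘ₗ S Y X ∘ₗ S X Y) hs ht).symm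
end

section
/- Let φ : A → B be an algebra map. Suppose there exist an algebra automorphism θ of B and a linear map E : B → A with E(1) = 1 and E(θ(φ(a)) b φ(a')) = a E(b) a' for all a, a' ∈ A, b ∈ B. Then for every left A-module V, the map ν_V : B ⊗_A V → V, b ⊗_A v ↦ E(b)·v, is well defined, and is A-linear as a map φ_*(θ_*(B ⊗_A V)) → V, where θ_*(B ⊗_A V) has B-action b·(b' ⊗_A v) = θ(b)b' ⊗_A v; moreover the family (ν_V) is natural in V and satisfies ν_V ∘ φ_*(θ_{B⊗_A V}) ∘ η_V = id for V = A, where η_V(v) = 1 ⊗_A v. -/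
/-- `E : B → A` is a morphism of `A`-bimodules when `B` carries the left action through `θ ∘ φ`
and the right action through `φ`. -/
def IsTwistedBimoduleHom {k A B : Type*} [CommSemiring k] [Semiring A] [Semiring B]
    [Algebra k A] [Algebra k B] (φ : A →ₐ[k] B) (θ : B ≃ₐ[k] B) (E : B →ₗ[k] A) : Prop :=
  ∀ (a a' : A) (b : B), E (θ (φ a) * b * φ a') = a * E b * a'

namespace IsTwistedBimoduleHom

variable {k A B : Type*} [CommSemiring k] [Semiring A] [Semiring B] [Algebra k A] [Algebra k B]
  {φ : A →ₐ[k] B} {θ : B ≃ₐ[k] B} {E : B →ₗ[k] A}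

theorem map_mul_right (hE : IsTwistedBimoduleHom φ θ E) (b : B) (a : A) :
    E (b * φ a) = E b * a := by
  simpa only [map_one, one_mul] using hE 1 a b

theorem map_twist_mul (hE : IsTwistedBimoduleHom φ θ E) (a : A) (b : B) :
    E (θ (φ a) * b) = a * E b := by
  simpa only [map_one, mul_one] using hE a 1 b

theorem map_twist (hE : IsTwistedBimoduleHom φ θ E) (hE1 : E 1 = 1) (a : A) :
    E (θ (φ a)) = a := by
  simpa only [map_one, mul_one, hE1] using hE a 1 1

end IsTwistedBimoduleHom

/-- given an algebra map `φ : A → B`, an algebra automorphism `θ` of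
`B` and a linear map `E : B → A` with `E(1) = 1` and
`E(θ(φ(a)) b φ(a')) = a E(b) a'`, the assignment `b ⊗ v ↦ E(b)·v` yields, for every
left `A`-module `V`, a well-defined `A`-linear map
`ν_V : φ_*(θ_*(B ⊗_A V)) → V`, natural in `V`, and the composite
`ν_V ∘ φ_*(θ_{B ⊗_A V}) ∘ η_V` is the identity for `V = A`.

Concretely: the bilinear map `(b, v) ↦ E(b)·v` is `A`-balanced, is `A`-linear for
the `θ`-twisted action on the `B`-factor, commutes with every `A`-linear map
`f : V → W`, and satisfies `E(θ(φ(a))) = a`. -/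
theorem induction_functor_twisted_separability_datum
    {k : Type*} [Field k] {A B : Type*} [Ring A] [Ring B] [Algebra k A] [Algebra k B]
    (φ : A →ₐ[k] B) (θ : B ≃ₐ[k] B) (E : B →ₗ[k] A)
    (hE1 : E 1 = 1)
    (hE : ∀ (a a' : A) (b : B), E (θ (φ a) * b * φ a') = a * E b * a') :
    -- `ν_V` is well defined: the bilinear map is `A`-balanced
    (∀ (V : Type*) [AddCommGroup V] [Module A V] (b : B) (a : A) (v : V),
        E (b * φ a) • v = E b • (a • v)) ∧
    -- `ν_V` is `A`-linear as a map `φ_*(θ_*(B ⊗_A V)) → V`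
    (∀ (V : Type*) [AddCommGroup V] [Module A V] (a : A) (b : B) (v : V),
        E (θ (φ a) * b) • v = a • (E b • v)) ∧
    -- naturality in `V`
    (∀ (V W : Type*) [AddCommGroup V] [Module A V] [AddCommGroup W] [Module A W]
        (f : V →+ W), (∀ (a : A) (v : V), f (a • v) = a • f v) →
        ∀ (b : B) (v : V), f (E b • v) = E b • f v) ∧
    -- the unit property at the free module `V = A`:
    -- `ν_A ∘ φ_*(θ_{B ⊗_A A}) ∘ η_A = id`
    (∀ a : A, E (θ (φ a)) = a) := by
  have hE : IsTwistedBimoduleHom φ θ E := hE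
  refine ⟨fun V _ _ b a v => ?_, fun V _ _ a b v => ?_, fun V W _ _ _ _ f hf b v => hf _ _,
    hE.map_twist hE1⟩
  · rw [hE.map_mul_right, mul_smul]
  · rw [hE.map_twist_mul, mul_smul]
end

section
/- Let φ : A → B be an algebra map such that the induction functor φ^* : A-Mod → B-Mod is twisted separable with a standard-type datum (θ_*, F, θ_−), where θ is an algebra automorphism of B and the free A-module A lies in F. Then there exists a linear map E : B → A with E(1) = 1 and E(θ(φ(a)) b φ(a')) = a E(b) a' for all a, a' ∈ A and b ∈ B. -/
/-!
Naturality of `M` in both variables shows that `M` is determined by `ν_W = M(ε_{θ_* F W})`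
through `M(g) = ν_W ∘ g^♭`, and that `ν` is natural in `W`. On `F(A)`, generated by
`u = η_A(1)`, set `E(b) = ν_A(b • u)`: `E` is left `A`-linear along `θ ∘ φ` because `ν_A` is
`A`-linear on the twice restricted module, right `A`-linear by naturality of `ν` against right
multiplications of `A`, and `E(1) = ν_A(θ_A(u)) = M(θ_A)(1) = 1` by the standard-type condition.
-/

open CategoryTheory TensorProduct

def AddMonoidHom.toLinearMapOfMapMul {k A B : Type*} [CommSemiring k] [Semiring A] [Semiring B]
    [Algebra k A] [Algebra k B] (E : B →+ A) (ψ : A →ₐ[k] B) (hE : ∀ a b, E (ψ a * b) = a * E b) :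
    B →ₗ[k] A where
  toFun := E
  map_add' := E.map_add
  map_smul' c b := by
    rw [Algebra.smul_def, ← ψ.commutes, hE, ← Algebra.smul_def]
    rfl

namespace CategoryTheory.Adjunction

variable {C D : Type*} [Category C] [Category D] {F : C ⥤ D} {U : D ⥤ C}
  (adj : F ⊣ U) (G : D ⥤ D) (M : ∀ V W : C, (F.obj V ⟶ G.obj (F.obj W)) → (V ⟶ W))

def TwistedNatural : Prop :=
  ∀ (V' V W W' : C) (α : V' ⟶ V) (β : W ⟶ W') (g : F.obj V ⟶ G.obj (F.obj W)),
    α ≫ M V W g ≫ β = M V' W' (F.map α ≫ g ≫ G.map (F.map β))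

/-- The transformation `ν : U G F ⟶ 𝟭` of Rafael's twisted criterion. -/
def rafaelMap (W : C) : U.obj (G.obj (F.obj W)) ⟶ W :=
  M _ W (adj.counit.app (G.obj (F.obj W)))

variable {adj G M}

theorem eq_homEquiv_comp_rafaelMap (hM : TwistedNatural G M) {V W : C}
    (g : F.obj V ⟶ G.obj (F.obj W)) : M V W g = adj.homEquiv V _ g ≫ rafaelMap adj G M W := by
  have h := hM _ _ W W (adj.homEquiv V _ g) (𝟙 W) (adj.counit.app (G.obj (F.obj W)))
  rw [Category.comp_id, F.map_id, G.map_id, Category.comp_id, ← homEquiv_counit,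
    Equiv.symm_apply_apply] at h
  exact h.symm

theorem rafaelMap_naturality (hM : TwistedNatural G M) {W W' : C} (β : W ⟶ W') :
    rafaelMap adj G M W ≫ β = U.map (G.map (F.map β)) ≫ rafaelMap adj G M W' := by
  have hβ := hM _ _ W W' (𝟙 _) β (adj.counit.app (G.obj (F.obj W)))
  have hUβ := hM _ _ W' W' (U.map (G.map (F.map β))) (𝟙 W') (adj.counit.app _)
  rw [Category.id_comp, F.map_id, Category.id_comp] at hβ
  rw [Category.comp_id, F.map_id, G.map_id, Category.comp_id, adj.counit_naturality] at hUβ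
  exact hβ.trans hUβ.symm

end CategoryTheory.Adjunction

namespace ModuleCat

variable {R S : Type*} [Ring R] [Ring S] {f : R →+* S} {F : ModuleCat R ⥤ ModuleCat S}
  (adj : F ⊣ restrictScalars f)

/-- Under `F(R) ≅ S ⊗_R R`, this is `1 ⊗ 1`. -/
noncomputable def unitOne : F.obj (of R R) := adj.unit.app (of R R) (1 : R)

theorem unit_app_self_apply (a : R) :
    adj.unit.app (of R R) a = f a • unitOne adj := by
  simpa [unitOne] using (adj.unit.app (of R R)).hom.map_smul a (1 : R)

theorem map_unitOne (g : of R R ⟶ of R R) :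
    F.map g (unitOne adj) = f (g (1 : R)) • unitOne adj := by
  have h := ConcreteCategory.congr_hom (adj.unit.naturality g) (1 : R)
  simp only [ConcreteCategory.comp_apply, Functor.id_map, Functor.comp_map] at h
  rw [unit_app_self_apply] at h
  exact h.symm

variable (τ : S →+* S)
  (ν : (restrictScalars f).obj ((restrictScalars τ).obj (F.obj (of R R))) ⟶ of R R)

noncomputable def expectation : S →+ R where
  toFun b := ν (b • unitOne adj)
  map_zero' := by rw [zero_smul]; exact ν.hom.map_zero
  map_add' b b' := by rw [add_smul]; exact ν.hom.map_add _ _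

theorem expectation_apply (b : S) : expectation adj τ ν b = ν (b • unitOne adj) := rfl

variable {adj τ ν}

theorem expectation_mul_mul
    (hν : ∀ g : of R R ⟶ of R R,
      ν ≫ g = (restrictScalars f).map ((restrictScalars τ).map (F.map g)) ≫ ν)
    (a a' : R) (b : S) :
    expectation adj τ ν (τ (f a) * b * f a') = a * expectation adj τ ν b * a' := by
  have hleft (x : F.obj (of R R)) : ν (τ (f a) • x) = a * ν x := ν.hom.map_smul a x
  have hright (x : F.obj (of R R)) :
      ν (F.map (ofHom (LinearMap.toSpanSingleton R R a')) x) = ν x * a' :=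
    (ConcreteCategory.congr_hom (hν (ofHom (LinearMap.toSpanSingleton R R a'))) x).symm
  have hu : (b * f a') • unitOne adj =
      F.map (ofHom (LinearMap.toSpanSingleton R R a')) (b • unitOne adj) := by
    rw [map_smul, map_unitOne, mul_smul]
    congr 3
    exact (one_smul R a').symm
  rw [expectation_apply, expectation_apply, mul_assoc, mul_smul, hleft, hu, hright, mul_assoc]

end ModuleCat

theorem induction_functor_twisted_separable_gives_E_general
    {k : Type*} [Field k] {A B : Type*} [Ring A] [Ring B] [Algebra k A] [Algebra k B]
    (φ : A →ₐ[k] B) (θ : B ≃ₐ[k] B)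
    (F : ModuleCat A ⥤ ModuleCat B)
    (adj : F ⊣ ModuleCat.restrictScalars φ.toRingHom)
    (𝓕 : Set (ModuleCat A))
    (hA : ModuleCat.of A A ∈ 𝓕)
    (θiso : ∀ P : ModuleCat A, P ∈ 𝓕 →
      (F.obj P ≅ (ModuleCat.restrictScalars (θ : B →ₐ[k] B).toRingHom).obj (F.obj P)))
    (M : ∀ V W : ModuleCat A,
      (F.obj V ⟶ (ModuleCat.restrictScalars (θ : B →ₐ[k] B).toRingHom).obj (F.obj W)) →
        (V ⟶ W))
    (hMnat : ∀ (V' V W W' : ModuleCat A) (α : V' ⟶ V) (β : W ⟶ W')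
      (f : F.obj V ⟶ (ModuleCat.restrictScalars (θ : B →ₐ[k] B).toRingHom).obj (F.obj W)),
        α ≫ M V W f ≫ β =
          M V' W' (F.map α ≫ f ≫
            (ModuleCat.restrictScalars (θ : B →ₐ[k] B).toRingHom).map (F.map β)))
    (hM : ∀ (P : ModuleCat A) (hP : P ∈ 𝓕), M P P (θiso P hP).hom = 𝟙 P)
    -- standard-type condition at the free module `A`, via the canonical
    -- trivialization `B ≃ F(A)`, `b ↦ b • η_A(1)`
    (hstd : ∀ (b : B) (u : (F.obj (ModuleCat.of A A) : Type _)),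
      u = (adj.unit.app (ModuleCat.of A A)) (1 : A) →
      (θiso (ModuleCat.of A A) hA).hom (b • u) = θ b • u) :
    ∃ E : B →ₗ[k] A, E 1 = 1 ∧
      ∀ (a a' : A) (b : B), E (θ (φ a) * b * φ a') = a * E b * a' := by
  let ν := Adjunction.rafaelMap adj _ M (ModuleCat.of A A)
  have hbimod := ModuleCat.expectation_mul_mul (adj := adj) (τ := (θ : B →ₐ[k] B).toRingHom)
    (ν := ν) fun g => Adjunction.rafaelMap_naturality hMnat g
  have hone : ModuleCat.expectation adj _ ν 1 = 1 := by
    have hid := (Adjunction.eq_homEquiv_comp_rafaelMap (adj := adj) hMnat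
      (θiso _ hA).hom).symm.trans (hM _ hA)
    have hθ := hstd 1 (ModuleCat.unitOne adj) rfl
    rw [one_smul, map_one, one_smul] at hθ
    rw [ModuleCat.expectation_apply, one_smul, ← hθ]
    exact ConcreteCategory.congr_hom hid (1 : A)
  exact ⟨(ModuleCat.expectation adj _ ν).toLinearMapOfMapMul ((θ : B →ₐ[k] B).comp φ)
    fun a b => by simpa using hbimod a 1 b, hone, hbimod⟩

/-- if the induction functor `φ^* = B ⊗_A -` (presented as a left
adjoint `F` of the restriction functor along `φ`) is twisted separable of standard
type with datum `(θ_*, 𝓕, θ_-)`, where `θ` is an algebra automorphism of `B` and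
the free module `A` lies in `𝓕`, then there is a linear map `E : B → A` with
`E(1) = 1` and `E(θ(φ(a)) b φ(a')) = a E(b) a'`.

The standard-type condition at `P = A` is expressed via the canonical
trivialization `B ≅ F(A)`, `b ↦ b • η_A(1)`. -/
theorem induction_functor_twisted_separable_gives_E
    {k : Type*} [Field k] {A B : Type*} [Ring A] [Ring B] [Algebra k A] [Algebra k B]
    (φ : A →ₐ[k] B) (θ : B ≃ₐ[k] B)
    (F : ModuleCat A ⥤ ModuleCat B)
    (adj : F ⊣ ModuleCat.restrictScalars φ.toRingHom)
    (𝓕 : Set (ModuleCat A)) (hgen : IsGeneratingClass 𝓕)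
    (hA : ModuleCat.of A A ∈ 𝓕)
    (θiso : ∀ P : ModuleCat A, P ∈ 𝓕 →
      (F.obj P ≅ (ModuleCat.restrictScalars (θ : B →ₐ[k] B).toRingHom).obj (F.obj P)))
    (M : ∀ V W : ModuleCat A,
      (F.obj V ⟶ (ModuleCat.restrictScalars (θ : B →ₐ[k] B).toRingHom).obj (F.obj W)) →
        (V ⟶ W))
    (hMnat : ∀ (V' V W W' : ModuleCat A) (α : V' ⟶ V) (β : W ⟶ W')
      (f : F.obj V ⟶ (ModuleCat.restrictScalars (θ : B →ₐ[k] B).toRingHom).obj (F.obj W)),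
        α ≫ M V W f ≫ β =
          M V' W' (F.map α ≫ f ≫
            (ModuleCat.restrictScalars (θ : B →ₐ[k] B).toRingHom).map (F.map β)))
    (hM : ∀ (P : ModuleCat A) (hP : P ∈ 𝓕), M P P (θiso P hP).hom = 𝟙 P)
    -- standard-type condition at the free module `A`, via the canonical
    -- trivialization `B ≃ F(A)`, `b ↦ b • η_A(1)`
    (hstd : ∀ (b : B) (u : (F.obj (ModuleCat.of A A) : Type _)),
      u = (adj.unit.app (ModuleCat.of A A)) (1 : A) →
      (θiso (ModuleCat.of A A) hA).hom (b • u) = θ b • u) :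
    ∃ E : B →ₗ[k] A, E 1 = 1 ∧
      ∀ (a a' : A) (b : B), E (θ (φ a) * b * φ a') = a * E b * a' :=
  induction_functor_twisted_separable_gives_E_general φ θ F adj 𝓕 hA θiso M hMnat hM hstd
end
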